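/- arXiv:2102.06440 — 4 statements merged into one kernel-verified Lean document; each statement's English description precedes it below -/
import Mathlib

section
/- In the two-step matching process (interview matching computed by hospital-proposing deferred acceptance under interview capacities, followed by doctor-proposing deferred acceptance restricted to interview partners), if the doctors' interview capacities are weakly increased from κ to κ', then in the hospital-proposing deferred acceptance of the interview step under κ', no doctor ever rejects a hospital with whom she was matched in the interview matching under κ. -/
/- Formal model of the two-step interview-then-match process of
Echenique-et-al-style markets: Step 1 computes the interview matching by
hospital-proposing deferred acceptance (with responsive, capacity-constrained
choice functions); Step 2 computes the final one-to-one matching by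
doctor-proposing deferred acceptance on preferences restricted to interview
partners. -/

open Finset

section Model

variable {D H : Type*} [Fintype D] [Fintype H] [DecidableEq D] [DecidableEq H]

/-- The (at most) `n` best elements of `s` according to `rank` (lower rank = better). -/
def topN {α : Type*} [DecidableEq α] (rank : α → ℕ) (n : ℕ) (s : Finset α) : Finset α :=
  s.filter fun x => (s.filter fun y => rank y < rank x).card < n

/-- A market: strict preferences represented by rank functions
(lower rank = more preferred) together with acceptability predicates. -/
structure Market (D H : Type*) where
  rankDH : D → H → ℕ
  accD : D → H → Bool
  rankHD : H → D → ℕ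
  accH : H → D → Bool

/-- Strict preferences: rank functions are injective. -/
def Market.Strict (M : Market D H) : Prop :=
  (∀ d, Function.Injective (M.rankDH d)) ∧ (∀ h, Function.Injective (M.rankHD h))

/-- Hospital `h` proposes to its `ι h` best acceptable doctors that have not rejected it. -/
def hProps (M : Market D H) (ι : H → ℕ) (R : Finset (H × D)) (h : H) : Finset D :=
  topN (M.rankHD h) (ι h) (univ.filter fun d => M.accH h d ∧ (h, d) ∉ R)

/-- Doctor `d` keeps her `κ d` best acceptable proposals. -/
def dKeeps (M : Market D H) (ι : H → ℕ) (κ : D → ℕ) (R : Finset (H × D)) (d : D) :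
    Finset H :=
  topN (fun h => M.rankDH d h) (κ d) (univ.filter fun h => M.accD d h ∧ d ∈ hProps M ι R h)

/-- One round of hospital-proposing deferred acceptance: the (cumulative) rejection set
grows by the proposals not kept. -/
def iStep (M : Market D H) (ι : H → ℕ) (κ : D → ℕ) (R : Finset (H × D)) :
    Finset (H × D) :=
  R ∪ univ.filter fun p : H × D => p.2 ∈ hProps M ι R p.1 ∧ p.1 ∉ dKeeps M ι κ R p.2

/-- Rejection set at the end of hospital-proposing DA (interview step). -/
def iRej (M : Market D H) (ι : H → ℕ) (κ : D → ℕ) : Finset (H × D) :=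
  (iStep M ι κ)^[Fintype.card D * Fintype.card H] ∅

/-- The interview matching (the hospital-optimal stable many-to-many matching) computed
by hospital-proposing deferred acceptance: pairs `(h, d)` such that `h` interviews `d`. -/
def interviews (M : Market D H) (ι : H → ℕ) (κ : D → ℕ) : Finset (H × D) :=
  univ.filter fun p : H × D =>
    p.2 ∈ hProps M ι (iRej M ι κ) p.1 ∧ p.1 ∈ dKeeps M ι κ (iRej M ι κ) p.2

/-- Doctor `d` proposes to her best interview partner that has not rejected her. -/
def dProps (M : Market D H) (V : Finset (H × D)) (S : Finset (D × H)) (d : D) :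
    Finset H :=
  topN (M.rankDH d) 1 (univ.filter fun h => (h, d) ∈ V ∧ (d, h) ∉ S)

/-- Hospital `h` keeps its best proposal. -/
def hKeeps (M : Market D H) (V : Finset (H × D)) (S : Finset (D × H)) (h : H) :
    Finset D :=
  topN (M.rankHD h) 1 (univ.filter fun d => h ∈ dProps M V S d)

/-- One round of doctor-proposing DA on preferences restricted to the interview matching `V`. -/
def mStep (M : Market D H) (V : Finset (H × D)) (S : Finset (D × H)) : Finset (D × H) :=
  S ∪ univ.filter fun p : D × H => p.2 ∈ dProps M V S p.1 ∧ p.1 ∉ hKeeps M V S p.2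

/-- Rejection set at the end of the doctor-proposing DA of the matching step. -/
def mRej (M : Market D H) (V : Finset (H × D)) : Finset (D × H) :=
  (mStep M V)^[Fintype.card D * Fintype.card H] ∅

/-- The final matching: doctor-proposing DA on preferences restricted to interviews `V`. -/
def finalMatch (M : Market D H) (V : Finset (H × D)) : Finset (D × H) :=
  univ.filter fun p : D × H =>
    p.2 ∈ dProps M V (mRej M V) p.1 ∧ p.1 ∈ hKeeps M V (mRej M V) p.2

/-- The `(ι,κ)`-matching: the culmination of the two-step process. -/
def ikMatching (M : Market D H) (ι : H → ℕ) (κ : D → ℕ) : Finset (D × H) :=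
  finalMatch M (interviews M ι κ)

/-- `(d, h)` is a blocking pair of `μ` (w.r.t. the true, unrestricted preferences). -/
def Blocks (M : Market D H) (μ : Finset (D × H)) (d : D) (h : H) : Prop :=
  M.accD d h ∧ M.accH h d ∧ (d, h) ∉ μ ∧
    (∀ h', (d, h') ∈ μ → M.rankDH d h < M.rankDH d h') ∧
    (∀ d', (d', h) ∈ μ → M.rankHD h d < M.rankHD h d')

instance (M : Market D H) (μ : Finset (D × H)) (d : D) (h : H) :
    Decidable (Blocks M μ d h) := by
  unfold Blocks; infer_instance

/-- A matching is stable if it admits no blocking pair. -/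
def Stable (M : Market D H) (μ : Finset (D × H)) : Prop := ∀ d h, ¬ Blocks M μ d h

/-- `(ι,κ)` is adequate at `M` if the `(ι,κ)`-matching is stable. -/
def Adequate (M : Market D H) (ι : H → ℕ) (κ : D → ℕ) : Prop :=
  Stable M (ikMatching M ι κ)

/-- One-to-one matching (as a set of pairs). -/
def IsMatching (μ : Finset (D × H)) : Prop :=
  (∀ d h h', (d, h) ∈ μ → (d, h') ∈ μ → h = h') ∧
    (∀ d d' h, (d, h) ∈ μ → (d', h) ∈ μ → d = d')

/-- Common preferences: all doctors rank the hospitals identically, all hospitals rank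
the doctors identically, everyone is mutually acceptable (and preferences are strict). -/
def CommonPrefs (M : Market D H) : Prop :=
  M.Strict ∧ (∀ d d', M.rankDH d = M.rankDH d') ∧ (∀ h h', M.rankHD h = M.rankHD h') ∧
    ∀ d h, M.accD d h ∧ M.accH h d

/-- Number of hospitals matched under `μ`. -/
def matchedHospitals (μ : Finset (D × H)) : ℕ :=
  (univ.filter fun h : H => ∃ d, (d, h) ∈ μ).card

/-- Number of blocking pairs of `μ`. -/
def blockingCount (M : Market D H) (μ : Finset (D × H)) : ℕ :=
  (univ.filter fun p : D × H => Blocks M μ p.1 p.2).card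

end Model

/-- `(ι,κ)` is globally adequate: adequate at every (strict) preference profile. -/
def GloballyAdequate (D H : Type*) [Fintype D] [Fintype H] [DecidableEq D] [DecidableEq H]
    (ι : H → ℕ) (κ : D → ℕ) : Prop :=
  ∀ M : Market D H, M.Strict → Adequate M ι κ

variable {D H : Type*} [Fintype D] [Fintype H] [DecidableEq D] [DecidableEq H]

/-! A hospital rejected by doctor `d` during the `κ`-run was rejected because `d` then held `κ d`
better offers; kept offers are never withdrawn, so `d` still holds them at the end of the run.
Now suppose that during the `κ'`-run, at a stage whose rejections all lie among those of the
completed `κ`-run, `d` rejects a hospital `a` that the `κ`-run does not reject. Then `a` ends in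
`d`'s `κ`-choice, so fewer than `κ d` better hospitals propose to `d` at the end of the `κ`-run.
Every better hospital proposing to `d` at the current `κ'`-stage proposes to `d` at the end of
the `κ`-run as well: otherwise it was rejected there, which would force `κ d` offers better than
`a`. Hence fewer than `κ d ≤ κ' d` better offers, and `a` is not rejected. So the `κ'`-run never
rejects beyond the `κ`-run, in particular never an interview pair of the `κ`-run. -/

section TopN

variable {α : Type*} [DecidableEq α] {rank : α → ℕ} {n : ℕ} {s t : Finset α} {x : α}

lemma mem_topN : x ∈ topN rank n s ↔ x ∈ s ∧ (s.filter fun y => rank y < rank x).card < n :=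
  mem_filter

lemma topN_subset : topN rank n s ⊆ s := filter_subset _ _

lemma mem_topN_of_subset (hts : t ⊆ s) (hx : x ∈ topN rank n s) (hxt : x ∈ t) :
    x ∈ topN rank n t :=
  mem_topN.2 ⟨hxt, (card_le_card (filter_subset_filter _ hts)).trans_lt (mem_topN.1 hx).2⟩

lemma le_card_topN (hn : n ≤ s.card) : n ≤ (topN rank n s).card := by
  by_contra! hlt
  have hne : (s \ topN rank n s).Nonempty := by
    rw [sdiff_nonempty]
    exact fun hs => (card_le_card hs).not_gt (hlt.trans_le hn)
  obtain ⟨x, hx, hmin⟩ := (s \ topN rank n s).exists_min_image rank hne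
  have hbetter : (s.filter fun y => rank y < rank x) ⊆ topN rank n s := by
    intro y hy
    rw [mem_filter] at hy
    by_contra hyn
    exact (hmin y (mem_sdiff.2 ⟨hy.1, hyn⟩)).not_gt hy.2
  exact (mem_sdiff.1 hx).2 (mem_topN.2 ⟨(mem_sdiff.1 hx).1, (card_le_card hbetter).trans_lt hlt⟩)

lemma rank_lt_of_mem_topN {r : ℕ} (hn : n ≤ (s.filter fun y => rank y < r).card)
    (hx : x ∈ topN rank n s) : rank x < r := by
  by_contra! hge
  have hsub : (s.filter fun y => rank y < r) ⊆ s.filter fun y => rank y < rank x :=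
    monotone_filter_right s fun _ _ hy => hy.trans_le hge
  exact (hn.trans (card_le_card hsub)).not_gt (mem_topN.1 hx).2

end TopN

lemma iterate_eq_of_card_le {α : Type*} [Fintype α] (f : Finset α → Finset α)
    (hf : ∀ s, s ⊆ f s) {n : ℕ} (hn : Fintype.card α ≤ n) :
    f (f^[n] ∅) = f^[n] ∅ := by
  have grows : ∀ k, f (f^[k] ∅) = f^[k] ∅ ∨ k ≤ (f^[k] ∅).card := by
    intro k
    induction k with
    | zero => simp
    | succ k ih =>
      rw [Function.iterate_succ_apply']
      by_cases hfix : f (f^[k] ∅) = f^[k] ∅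
      · simp [hfix]
      · have hlt := card_lt_card ((hf _).ssubset_of_ne (Ne.symm hfix))
        have hk := ih.resolve_left hfix
        omega
  rcases grows n with hfix | hcard
  · exact hfix
  · have huniv : f^[n] ∅ = univ :=
      eq_univ_of_card _ (le_antisymm (card_le_univ _) (hn.trans hcard))
    rw [huniv]
    exact (subset_univ _).antisymm (hf _)

lemma notMem_of_mem_hProps {D H : Type*} [Fintype D] [DecidableEq D] [DecidableEq H]
    {M : Market D H} {ι : H → ℕ} {R : Finset (H × D)} {h : H} {d : D}
    (hd : d ∈ hProps M ι R h) : (h, d) ∉ R :=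
  (mem_filter.1 (topN_subset hd)).2.2

lemma mem_hProps_of_subset {D H : Type*} [Fintype D] [DecidableEq D] [DecidableEq H]
    {M : Market D H} {ι : H → ℕ} {R R' : Finset (H × D)} {h : H} {d : D}
    (hRR' : R ⊆ R') (hd : d ∈ hProps M ι R h) (hR' : (h, d) ∉ R') :
    d ∈ hProps M ι R' h := by
  have hacc := (mem_filter.1 (topN_subset hd)).2.1
  refine mem_topN_of_subset ?_ hd (mem_filter.2 ⟨mem_univ _, hacc, hR'⟩)
  intro d' hd'
  simp only [mem_filter, mem_univ, true_and] at hd' ⊢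
  exact ⟨hd'.1, fun hR => hd'.2 (hRR' hR)⟩

section InterviewDA

variable (M : Market D H) (ι : H → ℕ)

def offers (R : Finset (H × D)) (d : D) : Finset H :=
  univ.filter fun h => M.accD d h ∧ d ∈ hProps M ι R h

def betterOffers (R : Finset (H × D)) (d : D) (a : H) : Finset H :=
  (offers M ι R d).filter fun h => M.rankDH d h < M.rankDH d a

def RejectionsJustified (κ : D → ℕ) (R : Finset (H × D)) : Prop :=
  ∀ d h, M.accD d h → (h, d) ∈ R → κ d ≤ (betterOffers M ι R d h).card

variable {M ι} {κ : D → ℕ} {R R' : Finset (H × D)} {h a : H} {d : D}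

lemma mem_dKeeps : h ∈ dKeeps M ι κ R d ↔
    h ∈ offers M ι R d ∧ (betterOffers M ι R d h).card < κ d :=
  mem_topN

lemma mem_offers : h ∈ offers M ι R d ↔ M.accD d h ∧ d ∈ hProps M ι R h := by
  simp [offers]

lemma mem_iStep : (h, d) ∈ iStep M ι κ R ↔
    (h, d) ∈ R ∨ d ∈ hProps M ι R h ∧ h ∉ dKeeps M ι κ R d := by
  simp [iStep]

lemma subset_iStep : R ⊆ iStep M ι κ R := subset_union_left

lemma mem_offers_of_subset (hRR' : R ⊆ R') (hh : h ∈ offers M ι R d) (hR' : (h, d) ∉ R') :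
    h ∈ offers M ι R' d := by
  rw [mem_offers] at hh ⊢
  exact ⟨hh.1, mem_hProps_of_subset hRR' hh.2 hR'⟩

lemma dKeeps_subset_offers_iStep : dKeeps M ι κ R d ⊆ offers M ι (iStep M ι κ R) d := by
  intro h hh
  have hoff := (mem_dKeeps.1 hh).1
  refine mem_offers_of_subset subset_iStep hoff ?_
  rw [mem_iStep, not_or, not_and_not_right]
  exact ⟨notMem_of_mem_hProps (mem_offers.1 hoff).2, fun _ => hh⟩

lemma rejectionsJustified_iStep (hR : RejectionsJustified M ι κ R) :
    RejectionsJustified M ι κ (iStep M ι κ R) := by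
  intro d h hacc hmem
  have hbefore : κ d ≤ (betterOffers M ι R d h).card := by
    rcases mem_iStep.1 hmem with hold | ⟨hprop, hrej⟩
    · exact hR d h hacc hold
    · by_contra! hlt
      exact hrej (mem_dKeeps.2 ⟨mem_offers.2 ⟨hacc, hprop⟩, hlt⟩)
  -- the `κ d` kept offers are better than `h` and are still made after the step
  have hkept : dKeeps M ι κ R d ⊆ betterOffers M ι (iStep M ι κ R) d h := fun h' hh' =>
    mem_filter.2 ⟨dKeeps_subset_offers_iStep hh', rank_lt_of_mem_topN hbefore hh'⟩
  calc κ d ≤ (dKeeps M ι κ R d).card := le_card_topN (hbefore.trans (card_filter_le _ _))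
    _ ≤ _ := card_le_card hkept

lemma rejectionsJustified_iRej : RejectionsJustified M ι κ (iRej M ι κ) := by
  suffices ∀ t, RejectionsJustified M ι κ ((iStep M ι κ)^[t] ∅) from this _
  intro t
  induction t with
  | zero => intro d h _ hmem; simp at hmem
  | succ t ih => rw [Function.iterate_succ_apply']; exact rejectionsJustified_iStep ih

lemma iStep_iRej : iStep M ι κ (iRej M ι κ) = iRej M ι κ :=
  iterate_eq_of_card_le _ (fun _ => subset_iStep) (by rw [Fintype.card_prod, Nat.mul_comm])

lemma mem_dKeeps_iRej (hd : d ∈ hProps M ι (iRej M ι κ) h) :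
    h ∈ dKeeps M ι κ (iRej M ι κ) d := by
  by_contra hnk
  apply notMem_of_mem_hProps hd
  rw [← iStep_iRej]
  exact mem_iStep.2 (Or.inr ⟨hd, hnk⟩)

lemma betterOffers_subset_betterOffers_iRej (hR : R ⊆ iRej M ι κ)
    (ha : a ∈ dKeeps M ι κ (iRej M ι κ) d) :
    betterOffers M ι R d a ⊆ betterOffers M ι (iRej M ι κ) d a := by
  intro h hh
  rw [betterOffers, mem_filter] at hh ⊢
  refine ⟨mem_offers_of_subset hR hh.1 fun hrej => ?_, hh.2⟩
  have hjust := rejectionsJustified_iRej d h (mem_offers.1 hh.1).1 hrej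
  have hmono : betterOffers M ι (iRej M ι κ) d h ⊆ betterOffers M ι (iRej M ι κ) d a :=
    monotone_filter_right _ fun _ _ hlt => hlt.trans hh.2
  exact (hjust.trans (card_le_card hmono)).not_gt (mem_dKeeps.1 ha).2

lemma iterate_iStep_subset_iRej {κ' : D → ℕ} (hκ : ∀ d, κ d ≤ κ' d) (t : ℕ) :
    (iStep M ι κ')^[t] ∅ ⊆ iRej M ι κ := by
  induction t with
  | zero => simp
  | succ t ih =>
    rw [Function.iterate_succ_apply']
    rintro ⟨a, d⟩ hmem
    rcases mem_iStep.1 hmem with hold | ⟨hprop, hrej⟩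
    · exact ih hold
    by_contra hnot
    have hkept := mem_dKeeps_iRej (mem_hProps_of_subset ih hprop hnot)
    have hacc := (mem_offers.1 (mem_dKeeps.1 hkept).1).1
    have hmany : κ' d ≤ (betterOffers M ι ((iStep M ι κ')^[t] ∅) d a).card := by
      by_contra! hlt
      exact hrej (mem_dKeeps.2 ⟨mem_offers.2 ⟨hacc, hprop⟩, hlt⟩)
    have hfew := (mem_dKeeps.1 hkept).2
    have hsub := card_le_card (betterOffers_subset_betterOffers_iRej ih hkept)
    exact (hmany.trans hsub).not_gt (hfew.trans_le (hκ d))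

end InterviewDA

theorem no_doctor_rejects_previous_interview_general
    (M : Market D H) (ι : H → ℕ) (κ κ' : D → ℕ)
    (hκ : ∀ d, κ d ≤ κ' d) :
    ∀ (t : ℕ) (h : H) (d : D),
      (h, d) ∈ interviews M ι κ → (h, d) ∉ (iStep M ι κ')^[t] (∅ : Finset (H × D)) := by
  intro t h d hint hmem
  exact notMem_of_mem_hProps (mem_filter.1 hint).2.1 (iterate_iStep_subset_iRej hκ t hmem)

/-- If doctors' interview capacities weakly increase from `κ` to `κ'`,
then during the hospital-proposing DA of the interview step under `κ'`, no doctor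
ever rejects a hospital with whom she was matched in the interview matching under `κ`:
an interview pair of the `κ`-run never enters the rejection set of the `κ'`-run. -/
theorem no_doctor_rejects_previous_interview
    (M : Market D H) (hM : M.Strict) (ι : H → ℕ) (κ κ' : D → ℕ)
    (hκ : ∀ d, κ d ≤ κ' d) :
    ∀ (t : ℕ) (h : H) (d : D),
      (h, d) ∈ interviews M ι κ → (h, d) ∉ (iStep M ι κ')^[t] (∅ : Finset (H × D)) :=
  no_doctor_rejects_previous_interview_general M ι κ κ' hκ
end

section
/- With interview capacities increased from κ to κ' ≥ κ pointwise, let ν and ν' be the corresponding interview matchings. If a hospital h interviews doctor d under κ' (d ∈ ν'(h)), previously interviewed d' under κ (d' ∈ ν(h)), and prefers d' to d (d' P_h d), then h continues to interview d' under κ' (d' ∈ ν'(h)). -/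
/- Formal model of the two-step interview-then-match process of
Echenique-et-al-style markets: Step 1 computes the interview matching by
hospital-proposing deferred acceptance (with responsive, capacity-constrained
choice functions); Step 2 computes the final one-to-one matching by
doctor-proposing deferred acceptance on preferences restricted to interview
partners. -/

open Finset

variable {D H : Type*} [Fintype D] [Fintype H] [DecidableEq D] [DecidableEq H]

namespace IKAux

open Finset

section TopN

variable {α : Type*} [DecidableEq α]

lemma topN_subset {rank : α → ℕ} {n : ℕ} {s : Finset α} : topN rank n s ⊆ s :=
  filter_subset _ _

lemma mem_topN_iff {rank : α → ℕ} {n : ℕ} {s : Finset α} {x : α} :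
    x ∈ topN rank n s ↔ x ∈ s ∧ (s.filter fun y => rank y < rank x).card < n := by
  simp [topN]

lemma mem_topN_of_subset {rank : α → ℕ} {n : ℕ} {s s' : Finset α} {x : α}
    (hss : s ⊆ s') (hx : x ∈ s) (h : x ∈ topN rank n s') : x ∈ topN rank n s := by
  rw [mem_topN_iff] at h ⊢
  exact ⟨hx, lt_of_le_of_lt (card_le_card (filter_subset_filter _ hss)) h.2⟩

lemma mem_topN_of_better {rank : α → ℕ} {n : ℕ} {s : Finset α} {x y : α}
    (hx : x ∈ topN rank n s) (hy : y ∈ s) (hlt : rank y < rank x) :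
    y ∈ topN rank n s := by
  rw [mem_topN_iff] at hx ⊢
  refine ⟨hy, lt_of_le_of_lt (card_le_card ?_) hx.2⟩
  intro z hz
  rw [mem_filter] at hz ⊢
  exact ⟨hz.1, hz.2.trans hlt⟩

lemma le_card_topN {rank : α → ℕ} {n : ℕ} {s : Finset α} (h : n ≤ s.card) :
    n ≤ (topN rank n s).card := by
  by_contra hc
  push_neg at hc
  have hsub0 := card_le_card (topN_subset (rank := rank) (n := n) (s := s))
  have hne : (s \ topN rank n s).Nonempty := by
    rw [← card_pos, card_sdiff_of_subset topN_subset]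
    omega
  obtain ⟨x, hx, hmin⟩ := exists_min_image _ rank hne
  rw [mem_sdiff] at hx
  have hge : n ≤ (s.filter fun y => rank y < rank x).card := by
    by_contra hlt
    push_neg at hlt
    exact hx.2 (mem_topN_iff.mpr ⟨hx.1, hlt⟩)
  have hsub : (s.filter fun y => rank y < rank x) ⊆ topN rank n s := by
    intro y hy
    rw [mem_filter] at hy
    by_contra hyn
    have := hmin y (mem_sdiff.mpr ⟨hy.1, hyn⟩)
    omega
  have := card_le_card hsub
  omega

lemma iterate_fixed {β : Type*} [Fintype β] [DecidableEq β]
    (f : Finset β → Finset β) (hf : ∀ s, s ⊆ f s) {n : ℕ} (hn : Fintype.card β ≤ n) :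
    f (f^[n] ∅) = f^[n] ∅ := by
  have claim : ∀ k, f (f^[k] ∅) = f^[k] ∅ ∨ k ≤ (f^[k] ∅).card := by
    intro k
    induction k with
    | zero => exact Or.inr (Nat.zero_le _)
    | succ k ih =>
      rcases ih with h | h
      · left; rw [Function.iterate_succ_apply', h, h]
      · by_cases he : f (f^[k] ∅) = f^[k] ∅
        · left; rw [Function.iterate_succ_apply', he, he]
        · right
          rw [Function.iterate_succ_apply']
          have h1 : f^[k] ∅ ⊂ f (f^[k] ∅) := (hf _).ssubset_of_ne (Ne.symm he)
          have := Finset.card_lt_card h1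
          omega
  rcases claim n with h | h
  · exact h
  · have huniv : f^[n] ∅ = Finset.univ :=
      Finset.eq_univ_of_card _ (le_antisymm (Finset.card_le_univ _) (le_trans hn h))
    rw [huniv]
    exact subset_antisymm (Finset.subset_univ _) (hf _)

end TopN

section DA

variable {D H : Type*} [Fintype D] [Fintype H] [DecidableEq D] [DecidableEq H]
variable (M : Market D H) (ι : H → ℕ)

/-- The set of hospitals currently proposing to doctor `d` that `d` finds acceptable. -/
def dBase (R : Finset (H × D)) (d : D) : Finset H :=
  univ.filter fun h => M.accD d h ∧ d ∈ hProps M ι R h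

lemma dKeeps_eq (κ : D → ℕ) (R : Finset (H × D)) (d : D) :
    dKeeps M ι κ R d = topN (fun h => M.rankDH d h) (κ d) (dBase M ι R d) := rfl

lemma mem_hProps_elim {R : Finset (H × D)} {h : H} {d : D}
    (hd : d ∈ hProps M ι R h) : M.accH h d ∧ (h, d) ∉ R := by
  have := topN_subset hd
  simpa using (Finset.mem_filter.mp this).2

lemma hProps_anti {R R' : Finset (H × D)} {h : H} {d : D} (hRR : R ⊆ R')
    (hnR' : (h, d) ∉ R') (hd : d ∈ hProps M ι R h) : d ∈ hProps M ι R' h := by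
  have hacc := (mem_hProps_elim M ι hd).1
  refine mem_topN_of_subset ?_ ?_ hd
  · intro x hx
    rw [mem_filter] at hx ⊢
    exact ⟨hx.1, hx.2.1, fun hc => hx.2.2 (hRR hc)⟩
  · simp [hacc, hnR']

lemma subset_iStep (κ : D → ℕ) (R : Finset (H × D)) : R ⊆ iStep M ι κ R :=
  subset_union_left

/-- Key survival lemma: if doctor `d`'s pool contains at least `κ d` acceptable
proposers of rank below `r`, the same holds after one more round. -/
lemma survive (κ : D → ℕ) {R : Finset (H × D)} {d : D} {r : ℕ}
    (hc : κ d ≤ ((dBase M ι R d).filter fun x => M.rankDH d x < r).card) :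
    κ d ≤ ((dBase M ι (iStep M ι κ R) d).filter fun x => M.rankDH d x < r).card := by
  have hbase : κ d ≤ (dBase M ι R d).card :=
    le_trans hc (card_le_card (filter_subset _ _))
  have hK : κ d ≤ (dKeeps M ι κ R d).card := by
    rw [dKeeps_eq]; exact le_card_topN hbase
  have hsub : dKeeps M ι κ R d ⊆
      (dBase M ι (iStep M ι κ R) d).filter fun x => M.rankDH d x < r := by
    intro x hxK
    have hxK' : x ∈ topN (fun h => M.rankDH d h) (κ d) (dBase M ι R d) := by
      rwa [dKeeps_eq] at hxK
    have hxB : x ∈ dBase M ι R d := topN_subset hxK'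
    rw [dBase, mem_filter] at hxB
    have hxprop : d ∈ hProps M ι R x := hxB.2.2
    have hnotR : (x, d) ∉ R := (mem_hProps_elim M ι hxprop).2
    have hnotR' : (x, d) ∉ iStep M ι κ R := by
      simp only [iStep, mem_union, mem_filter, mem_univ, true_and]
      push_neg
      exact ⟨hnotR, fun _ => hxK⟩
    have hrank : M.rankDH d x < r := by
      by_contra hge
      push_neg at hge
      have hmono : ((dBase M ι R d).filter fun y => M.rankDH d y < r) ⊆
          (dBase M ι R d).filter fun y => M.rankDH d y < M.rankDH d x := by
        intro z hz
        rw [mem_filter] at hz ⊢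
        exact ⟨hz.1, lt_of_lt_of_le hz.2 hge⟩
      have h1 := card_le_card hmono
      have h2 := (mem_topN_iff.mp hxK').2
      omega
    refine mem_filter.mpr ⟨?_, hrank⟩
    rw [dBase, mem_filter]
    exact ⟨mem_univ _, hxB.2.1, hProps_anti M ι (subset_iStep M ι κ R) hnotR' hxprop⟩
  exact le_trans hK (card_le_card hsub)

/-- Invariant along the run: whenever `d` has rejected `h₂` (and finds `h₂` acceptable),
`d`'s current pool has at least `κ d` acceptable proposers better than `h₂`. -/
lemma rej_invariant (κ : D → ℕ) : ∀ (t : ℕ) (h₂ : H) (d : D),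
    (h₂, d) ∈ (iStep M ι κ)^[t] ∅ → M.accD d h₂ →
    κ d ≤ (((dBase M ι ((iStep M ι κ)^[t] ∅) d)).filter
      fun x => M.rankDH d x < M.rankDH d h₂).card := by
  intro t
  induction t with
  | zero => intro h₂ d hmem; simp at hmem
  | succ t ih =>
    intro h₂ d hmem hacc
    rw [Function.iterate_succ_apply'] at hmem ⊢
    set Rt := (iStep M ι κ)^[t] ∅ with hRt
    rw [iStep, mem_union] at hmem
    rcases hmem with hold | hnew
    · exact survive M ι κ (ih h₂ d hold hacc)
    · rw [mem_filter] at hnew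
      obtain ⟨-, hprop, hnk⟩ := hnew
      have hbase : h₂ ∈ dBase M ι Rt d := by
        rw [dBase, mem_filter]; exact ⟨mem_univ _, hacc, hprop⟩
      have hge : κ d ≤ ((dBase M ι Rt d).filter
          fun x => M.rankDH d x < M.rankDH d h₂).card := by
        by_contra hlt
        push_neg at hlt
        exact hnk (by rw [dKeeps_eq]; exact mem_topN_iff.mpr ⟨hbase, hlt⟩)
      exact survive M ι κ hge

/-- Coupling: the run with larger doctor capacities produces fewer rejections. -/
lemma rej_subset (κ κ' : D → ℕ) (hκ : ∀ d, κ d ≤ κ' d) :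
    ∀ t : ℕ, (iStep M ι κ')^[t] ∅ ⊆ (iStep M ι κ)^[t] ∅ := by
  intro t
  induction t with
  | zero => simp
  | succ t ih =>
    rw [Function.iterate_succ_apply', Function.iterate_succ_apply']
    set Rt := (iStep M ι κ)^[t] ∅ with hRtdef
    set Rt' := (iStep M ι κ')^[t] ∅ with hRtdef'
    intro p hp
    rw [iStep, mem_union] at hp
    rcases hp with hold | hnew
    · exact subset_iStep M ι κ Rt (ih hold)
    · obtain ⟨h, d⟩ := p
      rw [mem_filter] at hnew
      obtain ⟨-, hprop', hnk'⟩ := hnew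
      by_cases hR : (h, d) ∈ Rt
      · exact subset_iStep M ι κ Rt hR
      · have hprop : d ∈ hProps M ι Rt h := hProps_anti M ι ih hR hprop'
        rw [iStep, mem_union]
        right
        rw [mem_filter]
        refine ⟨mem_univ _, hprop, ?_⟩
        intro hk
        -- h ∈ dKeeps κ Rt d; derive contradiction
        have hkB : h ∈ dBase M ι Rt d := by
          rw [dKeeps_eq] at hk; exact topN_subset hk
        have haccD : M.accD d h := by
          rw [dBase, mem_filter] at hkB; exact hkB.2.1
        have hhB' : h ∈ dBase M ι Rt' d := by
          rw [dBase, mem_filter]; exact ⟨mem_univ _, haccD, hprop'⟩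
        have hge' : κ' d ≤ ((dBase M ι Rt' d).filter
            fun x => M.rankDH d x < M.rankDH d h).card := by
          by_contra hlt
          push_neg at hlt
          exact hnk' (by rw [dKeeps_eq]; exact mem_topN_iff.mpr ⟨hhB', hlt⟩)
        have hlt : ((dBase M ι Rt d).filter
            fun x => M.rankDH d x < M.rankDH d h).card < κ d := by
          rw [dKeeps_eq, mem_topN_iff] at hk
          exact hk.2
        -- case split on whether some better proposer under κ' was already rejected under κ
        by_cases hcase : ∃ h₂ ∈ (dBase M ι Rt' d).filter
            (fun x => M.rankDH d x < M.rankDH d h), (h₂, d) ∈ Rt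
        · obtain ⟨h₂, hh₂, hh₂R⟩ := hcase
          rw [mem_filter] at hh₂
          have haccD₂ : M.accD d h₂ := by
            rw [dBase, mem_filter] at hh₂; exact hh₂.1 |>.2.1
          have hQ := rej_invariant M ι κ t h₂ d hh₂R haccD₂
          rw [← hRtdef] at hQ
          have hsub : ((dBase M ι Rt d).filter fun x => M.rankDH d x < M.rankDH d h₂) ⊆
              (dBase M ι Rt d).filter fun x => M.rankDH d x < M.rankDH d h := by
            intro z hz
            rw [mem_filter] at hz ⊢
            exact ⟨hz.1, hz.2.trans hh₂.2⟩
          have := card_le_card hsub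
          have := hκ d
          omega
        · push_neg at hcase
          have hsub : ((dBase M ι Rt' d).filter fun x => M.rankDH d x < M.rankDH d h) ⊆
              (dBase M ι Rt d).filter fun x => M.rankDH d x < M.rankDH d h := by
            intro z hz
            have hzR : (z, d) ∉ Rt := hcase z hz
            rw [mem_filter] at hz ⊢
            refine ⟨?_, hz.2⟩
            rw [dBase, mem_filter] at hz ⊢
            exact ⟨mem_univ _, hz.1.2.1, hProps_anti M ι ih hzR hz.1.2.2⟩
          have := card_le_card hsub
          have := hκ d
          omega

lemma iRej_subset (κ κ' : D → ℕ) (hκ : ∀ d, κ d ≤ κ' d) :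
    iRej M ι κ' ⊆ iRej M ι κ :=
  rej_subset M ι κ κ' hκ _

lemma iStep_iRej (κ : D → ℕ) : iStep M ι κ (iRej M ι κ) = iRej M ι κ := by
  apply iterate_fixed (iStep M ι κ) (subset_iStep M ι κ)
  rw [Fintype.card_prod, mul_comm]

end DA

end IKAux

/-- With capacities increased from `κ` to `κ' ≥ κ`, if hospital `h`
interviews `d` under `κ'`, previously interviewed `d'` under `κ`, and prefers `d'`
to `d`, then `h` continues to interview `d'` under `κ'`. -/
theorem hospital_keeps_preferred_interviewee
    (M : Market D H) (hM : M.Strict) (ι : H → ℕ) (κ κ' : D → ℕ)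
    (hκ : ∀ d, κ d ≤ κ' d) :
    ∀ (h : H) (d d' : D),
      (h, d) ∈ interviews M ι κ' → (h, d') ∈ interviews M ι κ →
      M.rankHD h d' < M.rankHD h d → (h, d') ∈ interviews M ι κ' := by
  intro h d d' hd hd' hlt
  rw [interviews, mem_filter] at hd hd' ⊢
  obtain ⟨-, hdP, hdK⟩ := hd
  obtain ⟨-, hd'P, hd'K⟩ := hd'
  have hsub : iRej M ι κ' ⊆ iRej M ι κ := IKAux.iRej_subset M ι κ κ' hκ
  have haccH : M.accH h d' := (IKAux.mem_hProps_elim M ι hd'P).1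
  have hnotR : (h, d') ∉ iRej M ι κ := (IKAux.mem_hProps_elim M ι hd'P).2
  have hnotR' : (h, d') ∉ iRej M ι κ' := fun hc => hnotR (hsub hc)
  -- d' is proposed to by h under κ'
  have hd'P' : d' ∈ hProps M ι (iRej M ι κ') h := by
    refine IKAux.mem_topN_of_better hdP ?_ hlt
    simp [haccH, hnotR']
  refine ⟨mem_univ _, hd'P', ?_⟩
  -- d' keeps h under κ'
  by_contra hnk
  have haccD : M.accD d' h := by
    rw [IKAux.dKeeps_eq] at hd'K
    have := IKAux.topN_subset hd'K
    rw [IKAux.dBase, mem_filter] at this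
    exact this.2.1
  have : (h, d') ∈ iStep M ι κ' (iRej M ι κ') := by
    rw [iStep, mem_union]
    right
    rw [mem_filter]
    exact ⟨mem_univ _, hd'P', hnk⟩
  rw [IKAux.iStep_iRej] at this
  exact hnotR' this
end

section
/- Starting at an adequate arrangement, doctors do not benefit from increases to their interview capacities: if (ι,κ) is adequate at P (the (ι,κ)-matching μ is stable under P) and κ'_d ≥ κ_d for every doctor d, then for every doctor d, μ(d) R_d μ'(d), where μ' is the (ι,κ')-matching. That is, no doctor prefers the (ι,κ')-matching to the (ι,κ)-matching. -/
set_option linter.unusedSectionVars false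


/- Formal model of the two-step interview-then-match process of
Echenique-et-al-style markets: Step 1 computes the interview matching by
hospital-proposing deferred acceptance (with responsive, capacity-constrained
choice functions); Step 2 computes the final one-to-one matching by
doctor-proposing deferred acceptance on preferences restricted to interview
partners. -/

open Finset

variable {D H : Type*} [Fintype D] [Fintype H] [DecidableEq D] [DecidableEq H]

namespace MoreInterviewsAux

/-! ### Auxiliary lemmas about `topN` -/

lemma mem_topN_iff {α : Type*} [DecidableEq α] {rank : α → ℕ} {n : ℕ} {s : Finset α} {x : α} :
    x ∈ topN rank n s ↔ x ∈ s ∧ (s.filter fun y => rank y < rank x).card < n := by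
  simp [topN]

lemma topN_subset {α : Type*} [DecidableEq α] {rank : α → ℕ} {n : ℕ} {s : Finset α} :
    topN rank n s ⊆ s := filter_subset _ _

lemma mem_topN_of_subset {α : Type*} [DecidableEq α] {rank : α → ℕ} {n : ℕ}
    {s s' : Finset α} {x : α} (hss : s' ⊆ s) (hx : x ∈ topN rank n s) (hx' : x ∈ s') :
    x ∈ topN rank n s' := by
  rw [mem_topN_iff] at hx ⊢
  exact ⟨hx', lt_of_le_of_lt (card_le_card (filter_subset_filter _ hss)) hx.2⟩

lemma mem_topN_of_lt {α : Type*} [DecidableEq α] {rank : α → ℕ} {n : ℕ}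
    {s : Finset α} {x y : α} (hx : x ∈ topN rank n s) (hy : y ∈ s)
    (hlt : rank y < rank x) : y ∈ topN rank n s := by
  rw [mem_topN_iff] at hx ⊢
  refine ⟨hy, lt_of_le_of_lt (card_le_card ?_) hx.2⟩
  intro z hz
  rw [mem_filter] at hz ⊢
  exact ⟨hz.1, hz.2.trans hlt⟩

lemma le_card_of_not_mem_topN {α : Type*} [DecidableEq α] {rank : α → ℕ} {n : ℕ}
    {s : Finset α} {x : α} (hx : x ∈ s) (hnx : x ∉ topN rank n s) :
    n ≤ (s.filter fun y => rank y < rank x).card := by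
  rw [mem_topN_iff] at hnx
  push_neg at hnx
  exact hnx hx

lemma topN_nonempty {α : Type*} [DecidableEq α] {rank : α → ℕ} {n : ℕ}
    {s : Finset α} (hs : s.Nonempty) (hn : 0 < n) : (topN rank n s).Nonempty := by
  obtain ⟨x, hx, hmin⟩ := s.exists_min_image rank hs
  refine ⟨x, ?_⟩
  rw [mem_topN_iff]
  refine ⟨hx, ?_⟩
  have : (s.filter fun y => rank y < rank x) = ∅ := by
    apply filter_eq_empty_iff.mpr
    intro y hy
    exact not_lt_of_ge (hmin y hy)
  rw [this]
  simpa using hn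

/-! ### Generic fixed-point lemma for inflationary maps on finsets -/

lemma iterate_fixpoint {α : Type*} [Fintype α] [DecidableEq α] (f : Finset α → Finset α)
    (hf : ∀ s, s ⊆ f s) {n : ℕ} (hn : Fintype.card α ≤ n) :
    f (f^[n] ∅) = f^[n] ∅ := by
  have key : ∀ k : ℕ, f^[k + 1] ∅ = f^[k] ∅ ∨ k + 1 ≤ (f^[k + 1] ∅).card := by
    intro k
    induction k with
    | zero =>
      by_cases h : f^[1] ∅ = f^[0] ∅
      · exact Or.inl h
      · right
        have : (f^[1] ∅ : Finset α) ≠ ∅ := by simpa using h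
        exact Finset.one_le_card.mpr (nonempty_iff_ne_empty.mpr this)
    | succ k ih =>
      by_cases heq : f^[k + 2] ∅ = f^[k + 1] ∅
      · exact Or.inl heq
      · right
        rcases ih with h | h
        · exfalso
          apply heq
          rw [Function.iterate_succ_apply' f k] at h
          show f^[k + 1 + 1] ∅ = f^[k + 1] ∅
          rw [Function.iterate_succ_apply' f (k + 1), Function.iterate_succ_apply' f k, h]
          exact h
        · have hsub : f^[k + 1] ∅ ⊆ f^[k + 2] ∅ := by
            show f^[k + 1] ∅ ⊆ f^[k + 1 + 1] ∅
            rw [Function.iterate_succ_apply' f (k + 1)]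
            exact hf _
          have hlt : (f^[k + 1] ∅).card < (f^[k + 2] ∅).card :=
            card_lt_card (ssubset_of_subset_of_ne hsub (Ne.symm heq))
          show k + 1 + 1 ≤ (f^[k + 1 + 1] ∅).card
          have : k + 1 + 1 = k + 2 := rfl
          rw [this]
          omega
  rcases key n with h | h
  · rwa [Function.iterate_succ_apply'] at h
  · exfalso
    have h2 := card_le_univ (f^[n + 1] ∅)
    omega

/-! ### Step 1: the interview matching -/

section Step1

variable {D H : Type*} [Fintype D] [Fintype H] [DecidableEq D] [DecidableEq H]

/-- The current offer set of doctor `d`. -/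
def Od (M : Market D H) (ι : H → ℕ) (R : Finset (H × D)) (d : D) : Finset H :=
  univ.filter fun h => M.accD d h ∧ d ∈ hProps M ι R h

variable {M : Market D H} {ι : H → ℕ} {κ κ' : D → ℕ}

lemma mem_hProps_elim {R : Finset (H × D)} {h : H} {d : D}
    (hx : d ∈ hProps M ι R h) : M.accH h d ∧ (h, d) ∉ R := by
  have := MoreInterviewsAux.topN_subset hx
  rw [mem_filter] at this
  exact this.2

lemma hProps_persist {R S : Finset (H × D)} {h : H} {d : D} (hRS : R ⊆ S)
    (hx : d ∈ hProps M ι R h) (hnS : (h, d) ∉ S) : d ∈ hProps M ι S h := by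
  refine MoreInterviewsAux.mem_topN_of_subset ?_ hx ?_
  · intro x hx'
    rw [mem_filter] at hx' ⊢
    exact ⟨hx'.1, hx'.2.1, fun c => hx'.2.2 (hRS c)⟩
  · rw [mem_filter]
    exact ⟨mem_univ _, (mem_hProps_elim hx).1, hnS⟩

lemma mem_Od_elim {R : Finset (H × D)} {h : H} {d : D} (hx : h ∈ Od M ι R d) :
    M.accD d h ∧ d ∈ hProps M ι R h := by
  rw [Od, mem_filter] at hx
  exact hx.2

lemma mem_Od_intro {R : Finset (H × D)} {h : H} {d : D} (h1 : M.accD d h)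
    (h2 : d ∈ hProps M ι R h) : h ∈ Od M ι R d := by
  rw [Od, mem_filter]
  exact ⟨mem_univ _, h1, h2⟩

lemma Od_persist {R S : Finset (H × D)} {h : H} {d : D} (hRS : R ⊆ S)
    (hx : h ∈ Od M ι R d) (hnS : (h, d) ∉ S) : h ∈ Od M ι S d :=
  mem_Od_intro (mem_Od_elim hx).1 (hProps_persist hRS (mem_Od_elim hx).2 hnS)

lemma dKeeps_eq (R : Finset (H × D)) (d : D) :
    dKeeps M ι κ R d = topN (M.rankDH d) (κ d) (Od M ι R d) := rfl

lemma iRej_fix : iStep M ι κ (iRej M ι κ) = iRej M ι κ := by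
  apply MoreInterviewsAux.iterate_fixpoint
  · intro s
    exact subset_union_left
  · rw [Fintype.card_prod]
    exact le_of_eq (Nat.mul_comm _ _)

lemma hProps_iRej_keeps {h : H} {d : D} (hx : d ∈ hProps M ι (iRej M ι κ) h) :
    h ∈ dKeeps M ι κ (iRej M ι κ) d := by
  by_contra hk
  have hmem : (h, d) ∈ iStep M ι κ (iRej M ι κ) :=
    mem_union_right _ (mem_filter.mpr ⟨mem_univ _, hx, hk⟩)
  rw [iRej_fix] at hmem
  exact (mem_hProps_elim hx).2 hmem

lemma mem_interviews {h : H} {d : D} :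
    (h, d) ∈ interviews M ι κ ↔ d ∈ hProps M ι (iRej M ι κ) h := by
  constructor
  · intro hx
    rw [interviews, mem_filter] at hx
    exact hx.2.1
  · intro hx
    rw [interviews, mem_filter]
    exact ⟨mem_univ _, hx, hProps_iRej_keeps hx⟩

lemma interviews_accH {h : H} {d : D} (hx : (h, d) ∈ interviews M ι κ) :
    M.accH h d := (mem_hProps_elim (mem_interviews.mp hx)).1

lemma interviews_accD {h : H} {d : D} (hx : (h, d) ∈ interviews M ι κ) :
    M.accD d h := by
  rw [interviews, mem_filter] at hx
  have := MoreInterviewsAux.topN_subset hx.2.2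
  rw [mem_filter] at this
  exact this.2.1

lemma interviews_not_iRej {h : H} {d : D} (hx : (h, d) ∈ interviews M ι κ) :
    (h, d) ∉ iRej M ι κ := (mem_hProps_elim (mem_interviews.mp hx)).2

/-- The invariant: every acceptable rejected hospital is bested by `κ d` current offers. -/
def Jp (M : Market D H) (ι : H → ℕ) (κ : D → ℕ) (R : Finset (H × D)) : Prop :=
  ∀ h d, (h, d) ∈ R → M.accD d h →
    κ d ≤ ((Od M ι R d).filter fun h₀ => M.rankDH d h₀ < M.rankDH d h).card

lemma Jp_step {R : Finset (H × D)} (hJ : Jp M ι κ R) : Jp M ι κ (iStep M ι κ R) := by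
  have hRS : R ⊆ iStep M ι κ R := subset_union_left
  suffices key : ∀ n h d, M.rankDH d h < n → (h, d) ∈ iStep M ι κ R → M.accD d h →
      κ d ≤ ((Od M ι (iStep M ι κ R) d).filter
        fun h₀ => M.rankDH d h₀ < M.rankDH d h).card by
    intro h d hmem hacc
    exact key (M.rankDH d h + 1) h d (Nat.lt_succ_self _) hmem hacc
  intro n
  induction n with
  | zero => intro h d hr; exact absurd hr (Nat.not_lt_zero _)
  | succ n IH =>
    intro h d hr hmem hacc
    have hT : κ d ≤ ((Od M ι R d).filter fun h₀ => M.rankDH d h₀ < M.rankDH d h).card := by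
      rcases mem_union.mp hmem with hR | hnew
      · exact hJ h d hR hacc
      · rw [mem_filter] at hnew
        obtain ⟨-, hp, hk⟩ := hnew
        exact MoreInterviewsAux.le_card_of_not_mem_topN (mem_Od_intro hacc hp) hk
    by_cases hc : ∃ h₀ ∈ (Od M ι R d).filter
        (fun h₀ => M.rankDH d h₀ < M.rankDH d h), (h₀, d) ∈ iStep M ι κ R
    · obtain ⟨h₀, hh₀, hS₀⟩ := hc
      rw [mem_filter] at hh₀
      have hacc₀ : M.accD d h₀ := (mem_Od_elim hh₀.1).1
      have := IH h₀ d (by omega) hS₀ hacc₀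
      refine le_trans this (card_le_card ?_)
      intro z hz
      rw [mem_filter] at hz ⊢
      exact ⟨hz.1, hz.2.trans hh₀.2⟩
    · push_neg at hc
      refine le_trans hT (card_le_card ?_)
      intro h₀ hh₀
      rw [mem_filter] at hh₀ ⊢
      exact ⟨Od_persist hRS hh₀.1 (hc h₀ (mem_filter.mpr hh₀)), hh₀.2⟩

lemma Jp_iRej : Jp M ι κ (iRej M ι κ) := by
  rw [iRej]
  generalize Fintype.card D * Fintype.card H = t
  induction t with
  | zero => intro h d hx; simp at hx
  | succ t IH =>
    rw [Function.iterate_succ_apply']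
    exact Jp_step IH

lemma iRej_mono (hκ : ∀ d, κ d ≤ κ' d) : iRej M ι κ' ⊆ iRej M ι κ := by
  suffices key : ∀ t, (iStep M ι κ')^[t] ∅ ⊆ iRej M ι κ by exact key _
  intro t
  induction t with
  | zero => simp
  | succ t IH =>
    rw [Function.iterate_succ_apply']
    set R' := (iStep M ι κ')^[t] ∅ with hR'
    intro p hp
    obtain ⟨h, d⟩ := p
    rcases mem_union.mp hp with hold | hnew
    · exact IH hold
    · rw [mem_filter] at hnew
      obtain ⟨-, hp', hk'⟩ := hnew
      by_contra hnot
      have h1 : d ∈ hProps M ι (iRej M ι κ) h := hProps_persist IH hp' hnot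
      have h2 : h ∈ dKeeps M ι κ (iRej M ι κ) d := hProps_iRej_keeps h1
      have hacc : M.accD d h := (mem_Od_elim (MoreInterviewsAux.topN_subset h2)).1
      have hlt : ((Od M ι (iRej M ι κ) d).filter
          fun h₀ => M.rankDH d h₀ < M.rankDH d h).card < κ d :=
        (MoreInterviewsAux.mem_topN_iff.mp h2).2
      have hge : κ' d ≤ ((Od M ι R' d).filter
          fun h₀ => M.rankDH d h₀ < M.rankDH d h).card :=
        MoreInterviewsAux.le_card_of_not_mem_topN (mem_Od_intro hacc hp') hk'
      by_cases hc : ∃ h₀ ∈ (Od M ι R' d).filter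
          (fun h₀ => M.rankDH d h₀ < M.rankDH d h), (h₀, d) ∈ iRej M ι κ
      · obtain ⟨h₀, hh₀, hR₀⟩ := hc
        rw [mem_filter] at hh₀
        have hacc₀ : M.accD d h₀ := (mem_Od_elim hh₀.1).1
        have hJ := Jp_iRej h₀ d hR₀ hacc₀
        have hsub : ((Od M ι (iRej M ι κ) d).filter
              fun x => M.rankDH d x < M.rankDH d h₀) ⊆
            ((Od M ι (iRej M ι κ) d).filter fun x => M.rankDH d x < M.rankDH d h) := by
          intro z hz
          rw [mem_filter] at hz ⊢
          exact ⟨hz.1, hz.2.trans hh₀.2⟩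
        have := le_trans hJ (card_le_card hsub)
        omega
      · push_neg at hc
        have hsub : ((Od M ι R' d).filter fun h₀ => M.rankDH d h₀ < M.rankDH d h) ⊆
            ((Od M ι (iRej M ι κ) d).filter fun h₀ => M.rankDH d h₀ < M.rankDH d h) := by
          intro h₀ hh₀
          rw [mem_filter] at hh₀ ⊢
          exact ⟨Od_persist IH hh₀.1 (hc h₀ (mem_filter.mpr hh₀)), hh₀.2⟩
        have := le_trans hge (card_le_card hsub)
        have := hκ d
        omega

/-- Doctor-side dichotomy: a `κ'`-interview that is worse than some `κ`-interview of the
same doctor is itself a `κ`-interview. -/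
lemma interviews_dichotomy (hκ : ∀ d, κ d ≤ κ' d) {h g : H} {d : D}
    (hd' : (h, d) ∈ interviews M ι κ') (hg : (g, d) ∈ interviews M ι κ)
    (hlt : M.rankDH d h < M.rankDH d g) : (h, d) ∈ interviews M ι κ := by
  by_cases hR : (h, d) ∈ iRej M ι κ
  · exfalso
    have hacc : M.accD d h := interviews_accD hd'
    have h1 := Jp_iRej h d hR hacc
    have h2 : g ∈ dKeeps M ι κ (iRej M ι κ) d :=
      hProps_iRej_keeps (mem_interviews.mp hg)
    have h3 : ((Od M ι (iRej M ι κ) d).filter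
        fun y => M.rankDH d y < M.rankDH d g).card < κ d :=
      (MoreInterviewsAux.mem_topN_iff.mp h2).2
    have hsub : ((Od M ι (iRej M ι κ) d).filter
          fun x => M.rankDH d x < M.rankDH d h) ⊆
        ((Od M ι (iRej M ι κ) d).filter fun x => M.rankDH d x < M.rankDH d g) := by
      intro z hz
      rw [mem_filter] at hz ⊢
      exact ⟨hz.1, hz.2.trans hlt⟩
    have := le_trans h1 (card_le_card hsub)
    omega
  · exact mem_interviews.mpr
      (hProps_persist (iRej_mono hκ) (mem_interviews.mp hd') hR)

/-- Promotion: a doctor preferred by `h` to one of its `κ'`-interviews, and not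
`κ`-rejected by `h`, is also a `κ'`-interview of `h`. -/
lemma interviews_promote (hκ : ∀ d, κ d ≤ κ' d) {h : H} {d d₀ : D}
    (hd : (h, d) ∈ interviews M ι κ') (hR : (h, d₀) ∉ iRej M ι κ)
    (haccH : M.accH h d₀) (hlt : M.rankHD h d₀ < M.rankHD h d) :
    (h, d₀) ∈ interviews M ι κ' := by
  have hp : d ∈ hProps M ι (iRej M ι κ') h := mem_interviews.mp hd
  have hpool : d₀ ∈ univ.filter fun x => M.accH h x ∧ (h, x) ∉ iRej M ι κ' := by
    rw [mem_filter]
    exact ⟨mem_univ _, haccH, fun c => hR (iRej_mono hκ c)⟩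
  exact mem_interviews.mpr (MoreInterviewsAux.mem_topN_of_lt hp hpool hlt)

/-- Hospital-side dichotomy: if a `κ`-interview of `g` is not a `κ'`-interview, then
all `κ'`-interviews of `g` are strictly better for `g`. -/
lemma interviews_hdichot (hM : M.Strict) (hκ : ∀ d, κ d ≤ κ' d) {g : H} {e x : D}
    (hν : (g, e) ∈ interviews M ι κ) (hν' : (g, e) ∉ interviews M ι κ')
    (hx : (g, x) ∈ interviews M ι κ') : M.rankHD g x < M.rankHD g e := by
  have hp : e ∈ hProps M ι (iRej M ι κ) g := mem_interviews.mp hν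
  have hRe : (g, e) ∉ iRej M ι κ := (mem_hProps_elim hp).2
  have hpool : e ∈ univ.filter fun y => M.accH g y ∧ (g, y) ∉ iRej M ι κ' := by
    rw [mem_filter]
    exact ⟨mem_univ _, (mem_hProps_elim hp).1, fun c => hRe (iRej_mono hκ c)⟩
  have hne : e ∉ hProps M ι (iRej M ι κ') g := fun c => hν' (mem_interviews.mpr c)
  have hx' : x ∈ hProps M ι (iRej M ι κ') g := mem_interviews.mp hx
  rcases lt_trichotomy (M.rankHD g x) (M.rankHD g e) with h | h | h
  · exact h
  · exact absurd (hM.2 g h) (fun c => hne (c ▸ hx'))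
  · exact absurd (MoreInterviewsAux.mem_topN_of_lt hx' hpool h) hne

end Step1

/-! ### Step 2: the final matching -/

section Step2

variable {D H : Type*} [Fintype D] [Fintype H] [DecidableEq D] [DecidableEq H]
variable {M : Market D H} {V : Finset (H × D)}

lemma topN_one_min {α : Type*} [DecidableEq α] {rank : α → ℕ} {s : Finset α} {x y : α}
    (hx : x ∈ topN rank 1 s) (hy : y ∈ s) : rank x ≤ rank y := by
  rw [MoreInterviewsAux.mem_topN_iff] at hx
  by_contra hlt
  push_neg at hlt
  have : y ∈ s.filter fun z => rank z < rank x := mem_filter.mpr ⟨hy, hlt⟩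
  have := card_pos.mpr ⟨y, this⟩
  omega

lemma mem_dProps_elim {S : Finset (D × H)} {d : D} {h : H}
    (hx : h ∈ dProps M V S d) : (h, d) ∈ V ∧ (d, h) ∉ S := by
  have := MoreInterviewsAux.topN_subset hx
  rw [mem_filter] at this
  exact this.2

lemma dProps_persist {S S' : Finset (D × H)} {d : D} {h : H} (hSS : S ⊆ S')
    (hx : h ∈ dProps M V S d) (hnS : (d, h) ∉ S') : h ∈ dProps M V S' d := by
  refine MoreInterviewsAux.mem_topN_of_subset ?_ hx ?_
  · intro z hz
    rw [mem_filter] at hz ⊢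
    exact ⟨hz.1, hz.2.1, fun c => hz.2.2 (hSS c)⟩
  · rw [mem_filter]
    exact ⟨mem_univ _, (mem_dProps_elim hx).1, hnS⟩

lemma mRej_fix : mStep M V (mRej M V) = mRej M V := by
  apply MoreInterviewsAux.iterate_fixpoint
  · intro s
    exact subset_union_left
  · rw [Fintype.card_prod]

lemma mem_finalMatch_iff {d : D} {h : H} :
    (d, h) ∈ finalMatch M V ↔
      h ∈ dProps M V (mRej M V) d ∧ d ∈ hKeeps M V (mRej M V) h := by
  rw [finalMatch, mem_filter]
  simp

lemma finalMatch_V {d : D} {h : H} (hx : (d, h) ∈ finalMatch M V) : (h, d) ∈ V :=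
  (mem_dProps_elim (mem_finalMatch_iff.mp hx).1).1

lemma finalMatch_unique_d (hM : M.Strict) {d : D} {h h₂ : H}
    (h1 : (d, h) ∈ finalMatch M V) (h2 : (d, h₂) ∈ finalMatch M V) : h = h₂ := by
  have p1 := (mem_finalMatch_iff.mp h1).1
  have p2 := (mem_finalMatch_iff.mp h2).1
  apply hM.1 d
  exact le_antisymm (topN_one_min p1 (MoreInterviewsAux.topN_subset p2))
    (topN_one_min p2 (MoreInterviewsAux.topN_subset p1))

lemma finalMatch_unique_h (hM : M.Strict) {d d₂ : D} {h : H}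
    (h1 : (d, h) ∈ finalMatch M V) (h2 : (d₂, h) ∈ finalMatch M V) : d = d₂ := by
  have p1 := (mem_finalMatch_iff.mp h1).2
  have p2 := (mem_finalMatch_iff.mp h2).2
  apply hM.2 h
  exact le_antisymm (topN_one_min p1 (MoreInterviewsAux.topN_subset p2))
    (topN_one_min p2 (MoreInterviewsAux.topN_subset p1))

lemma hKeeps_of_dProps {d : D} {h : H} (hp : h ∈ dProps M V (mRej M V) d) :
    d ∈ hKeeps M V (mRej M V) h := by
  by_contra hk
  have hmem : (d, h) ∈ mStep M V (mRej M V) :=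
    mem_union_right _ (mem_filter.mpr ⟨mem_univ _, hp, hk⟩)
  rw [mRej_fix] at hmem
  exact (mem_dProps_elim hp).2 hmem

/-- M3: a doctor with an unrejected interview partner is finally matched at least as well. -/
lemma finalMatch_exists_better {d : D} {h : H} (hV : (h, d) ∈ V)
    (hS : (d, h) ∉ mRej M V) :
    ∃ h₀, (d, h₀) ∈ finalMatch M V ∧ M.rankDH d h₀ ≤ M.rankDH d h := by
  have hs : h ∈ univ.filter fun g => (g, d) ∈ V ∧ (d, g) ∉ mRej M V := by
    rw [mem_filter]
    exact ⟨mem_univ _, hV, hS⟩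
  obtain ⟨h₀, hh₀⟩ := MoreInterviewsAux.topN_nonempty ⟨h, hs⟩ Nat.one_pos
  have hp : h₀ ∈ dProps M V (mRej M V) d := hh₀
  exact ⟨h₀, mem_finalMatch_iff.mpr ⟨hp, hKeeps_of_dProps hp⟩, topN_one_min hh₀ hs⟩

/-- The rejection invariant for step 2. -/
lemma mRej_invariant : ∀ t d h, (d, h) ∈ (mStep M V)^[t] ∅ →
    ∃ d₀, h ∈ dProps M V ((mStep M V)^[t] ∅) d₀ ∧ M.rankHD h d₀ < M.rankHD h d := by
  intro t
  induction t with
  | zero => intro d h hx; simp at hx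
  | succ t IH =>
    rw [Function.iterate_succ_apply']
    set S := (mStep M V)^[t] ∅ with hS
    have hSS : S ⊆ mStep M V S := subset_union_left
    suffices key : ∀ n d h, M.rankHD h d < n → (d, h) ∈ mStep M V S →
        ∃ d₀, h ∈ dProps M V (mStep M V S) d₀ ∧ M.rankHD h d₀ < M.rankHD h d by
      intro d h hx
      exact key (M.rankHD h d + 1) d h (Nat.lt_succ_self _) hx
    intro n
    induction n with
    | zero => intro d h hr; exact absurd hr (Nat.not_lt_zero _)
    | succ n IHn =>
      intro d h hr hmem
      have hcand : ∃ d₀, h ∈ dProps M V S d₀ ∧ M.rankHD h d₀ < M.rankHD h d := by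
        rcases mem_union.mp hmem with hold | hnew
        · exact IH d h hold
        · rw [mem_filter] at hnew
          obtain ⟨-, hp, hk⟩ := hnew
          dsimp only at hp hk
          have hd : d ∈ univ.filter fun e => h ∈ dProps M V S e := by
            rw [mem_filter]; exact ⟨mem_univ _, hp⟩
          have h1 := MoreInterviewsAux.le_card_of_not_mem_topN hd hk
          have h2 : ((univ.filter fun e => h ∈ dProps M V S e).filter
              fun y => M.rankHD h y < M.rankHD h d).Nonempty := by
            rw [← card_pos]; omega
          obtain ⟨d₀, hd₀⟩ := h2
          rw [mem_filter, mem_filter] at hd₀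
          exact ⟨d₀, hd₀.1.2, hd₀.2⟩
      obtain ⟨d₀, hp₀, hlt₀⟩ := hcand
      by_cases hS' : (d₀, h) ∈ mStep M V S
      · obtain ⟨d₁, hp₁, hlt₁⟩ := IHn d₀ h (by omega) hS'
        exact ⟨d₁, hp₁, hlt₁.trans hlt₀⟩
      · exact ⟨d₀, dProps_persist hSS hp₀ hS', hlt₀⟩

/-- M4: rejections are justified by the final matching. -/
lemma mRej_justified {d : D} {h : H} (hx : (d, h) ∈ mRej M V) :
    ∃ d₀, (d₀, h) ∈ finalMatch M V ∧ M.rankHD h d₀ < M.rankHD h d := by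
  obtain ⟨d₀, hp, hlt⟩ := mRej_invariant _ d h hx
  exact ⟨d₀, mem_finalMatch_iff.mpr ⟨hp, hKeeps_of_dProps hp⟩, hlt⟩

/-- M5: the final matching is doctor-optimal among matchings stable within `V`. -/
lemma finalMatch_doctor_optimal (hM : M.Strict) (σ : Finset (D × H))
    (hmh : ∀ d d₂ h, (d, h) ∈ σ → (d₂, h) ∈ σ → d = d₂)
    (hσV : ∀ d h, (d, h) ∈ σ → (h, d) ∈ V)
    (hstab : ∀ h d, (h, d) ∈ V →
      (∀ h₀, (d, h₀) ∈ σ → M.rankDH d h < M.rankDH d h₀) →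
      ∃ d₀, (d₀, h) ∈ σ ∧ M.rankHD h d₀ < M.rankHD h d) :
    ∀ d h, (d, h) ∈ σ →
      ∃ h₀, (d, h₀) ∈ finalMatch M V ∧ M.rankDH d h₀ ≤ M.rankDH d h := by
  have hdisj : ∀ t d h, (d, h) ∈ σ → (d, h) ∉ (mStep M V)^[t] ∅ := by
    intro t
    induction t with
    | zero => intro d h _; simp
    | succ t IH =>
      intro d h hσ hmem
      rw [Function.iterate_succ_apply'] at hmem
      set S := (mStep M V)^[t] ∅ with hS
      rcases mem_union.mp hmem with hold | hnew
      · exact IH d h hσ hold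
      · rw [mem_filter] at hnew
        obtain ⟨-, hp, hk⟩ := hnew
        dsimp only at hp hk
        have hd : d ∈ univ.filter fun e => h ∈ dProps M V S e := by
          rw [mem_filter]; exact ⟨mem_univ _, hp⟩
        have h1 := MoreInterviewsAux.le_card_of_not_mem_topN hd hk
        have h2 : ((univ.filter fun e => h ∈ dProps M V S e).filter
            fun y => M.rankHD h y < M.rankHD h d).Nonempty := by
          rw [← card_pos]; omega
        obtain ⟨d₀, hd₀⟩ := h2
        rw [mem_filter, mem_filter] at hd₀
        obtain ⟨⟨-, hp₀⟩, hlt₀⟩ := hd₀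
        have hpref : ∀ h₀, (d₀, h₀) ∈ σ → M.rankDH d₀ h < M.rankDH d₀ h₀ := by
          intro h₀ hσ₀
          have hh₀pool : h₀ ∈ univ.filter fun g => (g, d₀) ∈ V ∧ (d₀, g) ∉ S := by
            rw [mem_filter]
            exact ⟨mem_univ _, hσV _ _ hσ₀, IH d₀ h₀ hσ₀⟩
          have hle : M.rankDH d₀ h ≤ M.rankDH d₀ h₀ := topN_one_min hp₀ hh₀pool
          rcases lt_or_eq_of_le hle with hlt | heq
          · exact hlt
          · exfalso
            have hhh : h = h₀ := hM.1 d₀ heq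
            subst hhh
            have : d₀ = d := hmh _ _ _ hσ₀ hσ
            subst this
            exact lt_irrefl _ hlt₀
        obtain ⟨d₁, hσ₁, hlt₁⟩ := hstab h d₀ (mem_dProps_elim hp₀).1 hpref
        have : d₁ = d := hmh _ _ _ hσ₁ hσ
        subst this
        omega
  intro d h hσ
  exact finalMatch_exists_better (hσV _ _ hσ) (hdisj _ d h hσ)

end Step2

/-! ### The main argument -/

theorem main_aux {D H : Type*} [Fintype D] [Fintype H] [DecidableEq D] [DecidableEq H]
    (M : Market D H) (hM : M.Strict) (ι : H → ℕ) (κ κ' : D → ℕ)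
    (hadq : Adequate M ι κ) (hκ : ∀ d, κ d ≤ κ' d) :
    ∀ (d : D) (h' : H), (d, h') ∈ ikMatching M ι κ' →
      ∃ h : H, (d, h) ∈ ikMatching M ι κ ∧ M.rankDH d h ≤ M.rankDH d h' := by
  classical
  intro d h' hmem
  by_contra hno
  push_neg at hno
  have hmem' : (d, h') ∈ finalMatch M (interviews M ι κ') := hmem
  have hst : Stable M (ikMatching M ι κ) := hadq
  -- the set of doctors who strictly prefer the κ'-matching
  set A : Finset D := univ.filter (fun e => ∃ g,
      (e, g) ∈ finalMatch M (interviews M ι κ') ∧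
      ∀ h, (e, h) ∈ finalMatch M (interviews M ι κ) → M.rankDH e g < M.rankDH e h)
    with hA
  have memA : ∀ e : D, e ∈ A ↔ ∃ g, (e, g) ∈ finalMatch M (interviews M ι κ') ∧
      ∀ h, (e, h) ∈ finalMatch M (interviews M ι κ) → M.rankDH e g < M.rankDH e h := by
    intro e
    rw [hA, mem_filter]
    simp only [mem_univ, true_and]
  have hdA : d ∈ A := (memA d).mpr ⟨h', hmem', fun h hh => hno h hh⟩
  -- the chaining step, via full stability (adequacy)
  have chain : ∀ e g, (e, g) ∈ finalMatch M (interviews M ι κ') →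
      (∀ h, (e, h) ∈ finalMatch M (interviews M ι κ) → M.rankDH e g < M.rankDH e h) →
      ∃ e₀, e₀ ∈ A ∧ (e₀, g) ∈ finalMatch M (interviews M ι κ) ∧
        M.rankHD g e₀ < M.rankHD g e := by
    intro e g hg hpref
    have hgν' : (g, e) ∈ interviews M ι κ' := finalMatch_V hg
    have haccD : M.accD e g := interviews_accD hgν'
    have haccH : M.accH g e := interviews_accH hgν'
    have hnotμ : (e, g) ∉ finalMatch M (interviews M ι κ) :=
      fun c => lt_irrefl _ (hpref g c)
    have hnb : ¬ Blocks M (ikMatching M ι κ) e g := hst e g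
    unfold Blocks at hnb
    push_neg at hnb
    obtain ⟨e₀, he₀μ, hle⟩ := hnb haccD haccH hnotμ hpref
    have he₀μ : (e₀, g) ∈ finalMatch M (interviews M ι κ) := he₀μ
    have hne : e₀ ≠ e := fun c => hnotμ (by rw [← c]; exact he₀μ)
    have hlt : M.rankHD g e₀ < M.rankHD g e :=
      lt_of_le_of_ne hle fun c => hne (hM.2 g c)
    have hgν : (g, e₀) ∈ interviews M ι κ := finalMatch_V he₀μ
    have he₀ν' : (g, e₀) ∈ interviews M ι κ' :=
      interviews_promote hκ hgν' (interviews_not_iRej hgν) (interviews_accH hgν) hlt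
    refine ⟨e₀, ?_, he₀μ, hlt⟩
    by_cases hrej : (e₀, g) ∈ mRej M (interviews M ι κ')
    · exfalso
      obtain ⟨e₁, he₁, hlt₁⟩ := mRej_justified hrej
      have he : e₁ = e := finalMatch_unique_h hM he₁ hg
      rw [he] at hlt₁
      omega
    · obtain ⟨g₁, hg₁, hle₁⟩ := finalMatch_exists_better he₀ν' hrej
      have hne₁ : g₁ ≠ g := fun c =>
        hne (finalMatch_unique_h hM (by rw [← c]; exact hg₁) hg)
      have hlt₁ : M.rankDH e₀ g₁ < M.rankDH e₀ g :=
        lt_of_le_of_ne hle₁ fun c => hne₁ (hM.1 e₀ c)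
      refine (memA e₀).mpr ⟨g₁, hg₁, ?_⟩
      intro h hh
      have : h = g := finalMatch_unique_d hM hh he₀μ
      rw [this]
      exact hlt₁
  -- counting: the hospitals matched to A in the two matchings coincide,
  -- and every doctor in A is matched under κ
  set Mf : Finset (D × H) :=
    (finalMatch M (interviews M ι κ)).filter (fun p => p.1 ∈ A) with hMf
  set Mf' : Finset (D × H) :=
    (finalMatch M (interviews M ι κ')).filter (fun p => p.1 ∈ A) with hMf'
  set HAk := Mf.image Prod.snd with hHAdef
  set HAk' := Mf'.image Prod.snd with hHA'def
  have hsub : HAk' ⊆ HAk := by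
    intro g hg
    rw [hHA'def, mem_image] at hg
    obtain ⟨⟨e, g₂⟩, hp, hpe⟩ := hg
    dsimp at hpe
    subst hpe
    rw [hMf', mem_filter] at hp
    obtain ⟨hpμ', hpA⟩ := hp
    obtain ⟨g₀, hg₀, hpref⟩ := (memA e).mp hpA
    have hg₀g : g₀ = g₂ := finalMatch_unique_d hM hg₀ hpμ'
    subst hg₀g
    obtain ⟨e₀, he₀A, he₀μ, -⟩ := chain e g₀ hpμ' hpref
    rw [hHAdef, mem_image]
    exact ⟨(e₀, g₀), mem_filter.mpr ⟨he₀μ, he₀A⟩, rfl⟩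
  have hcard' : HAk'.card = Mf'.card := by
    rw [hHA'def]
    apply card_image_of_injOn
    intro p hp q hq hpq
    obtain ⟨a, b⟩ := p
    obtain ⟨c, e⟩ := q
    rw [mem_coe, hMf', mem_filter] at hp hq
    dsimp at hpq
    subst hpq
    have := finalMatch_unique_h hM hp.1 hq.1
    rw [this]
  have hcardf : (Mf.image Prod.fst).card = Mf.card := by
    apply card_image_of_injOn
    intro p hp q hq hpq
    obtain ⟨a, b⟩ := p
    obtain ⟨c, e⟩ := q
    rw [mem_coe, hMf, mem_filter] at hp hq
    dsimp at hpq
    subst hpq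
    have := finalMatch_unique_d hM hp.1 hq.1
    rw [this]
  have hAsub : A ⊆ Mf'.image Prod.fst := by
    intro e he
    obtain ⟨g, hg, -⟩ := (memA e).mp he
    rw [mem_image]
    exact ⟨(e, g), mem_filter.mpr ⟨hg, he⟩, rfl⟩
  have hfstsub : Mf.image Prod.fst ⊆ A := by
    intro e he
    rw [mem_image] at he
    obtain ⟨p, hp, hpe⟩ := he
    subst hpe
    exact (mem_filter.mp hp).2
  have hc1 : A.card ≤ HAk'.card := by
    calc A.card ≤ (Mf'.image Prod.fst).card := card_le_card hAsub
    _ ≤ Mf'.card := card_image_le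
    _ = HAk'.card := hcard'.symm
  have hc2 : HAk.card ≤ A.card := by
    calc HAk.card ≤ Mf.card := card_image_le
    _ = (Mf.image Prod.fst).card := hcardf.symm
    _ ≤ A.card := card_le_card hfstsub
  have hHAeq : HAk' = HAk :=
    eq_of_subset_of_card_le hsub (hc2.trans hc1)
  have matchedA : ∀ e ∈ A, ∃ h, (e, h) ∈ finalMatch M (interviews M ι κ) := by
    intro e he
    have hcards : A.card ≤ (Mf.image Prod.fst).card := by
      calc A.card ≤ HAk'.card := hc1
      _ = HAk.card := by rw [hHAeq]
      _ ≤ Mf.card := card_image_le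
      _ = (Mf.image Prod.fst).card := hcardf.symm
    have heq : Mf.image Prod.fst = A := eq_of_subset_of_card_le hfstsub hcards
    rw [← heq, mem_image] at he
    obtain ⟨⟨a, b⟩, hp, hpe⟩ := he
    dsimp at hpe
    subst hpe
    exact ⟨b, (mem_filter.mp hp).1⟩
  -- the swap matching σ
  set σ : Finset (D × H) :=
    (finalMatch M (interviews M ι κ)).filter (fun p => p.1 ∉ A) ∪ Mf' with hσdef
  have hσmem : ∀ e g, (e, g) ∈ σ ↔
      ((e, g) ∈ finalMatch M (interviews M ι κ) ∧ e ∉ A) ∨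
      ((e, g) ∈ finalMatch M (interviews M ι κ') ∧ e ∈ A) := by
    intro e g
    rw [hσdef, mem_union]
    constructor
    · rintro (hx | hx)
      · exact Or.inl ⟨(mem_filter.mp hx).1, (mem_filter.mp hx).2⟩
      · exact Or.inr ⟨(mem_filter.mp hx).1, (mem_filter.mp hx).2⟩
    · rintro (⟨h1, h2⟩ | ⟨h1, h2⟩)
      · exact Or.inl (mem_filter.mpr ⟨h1, h2⟩)
      · exact Or.inr (mem_filter.mpr ⟨h1, h2⟩)
  have hσh : ∀ e e₂ g, (e, g) ∈ σ → (e₂, g) ∈ σ → e = e₂ := by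
    have key : ∀ e e₂ g, (e, g) ∈ finalMatch M (interviews M ι κ) → e ∉ A →
        (e₂, g) ∈ finalMatch M (interviews M ι κ') → e₂ ∈ A → False := by
      intro e e₂ g h1 h2 h3 h4
      have hgH : g ∈ HAk' := by
        rw [hHA'def, mem_image]
        exact ⟨(e₂, g), mem_filter.mpr ⟨h3, h4⟩, rfl⟩
      rw [hHAeq, hHAdef, mem_image] at hgH
      obtain ⟨⟨a, b⟩, hp, hpe⟩ := hgH
      dsimp at hpe
      subst hpe
      rw [hMf, mem_filter] at hp
      exact h2 (by rw [finalMatch_unique_h hM h1 hp.1]; exact hp.2)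
    intro e e₂ g h1 h2
    rcases (hσmem e g).mp h1 with ⟨ha, hb⟩ | ⟨ha, hb⟩ <;>
      rcases (hσmem e₂ g).mp h2 with ⟨hc, hd⟩ | ⟨hc, hd⟩
    · exact finalMatch_unique_h hM ha hc
    · exact (key e e₂ g ha hb hc hd).elim
    · exact (key e₂ e g hc hd ha hb).elim
    · exact finalMatch_unique_h hM ha hc
  have hσV : ∀ e g, (e, g) ∈ σ → (g, e) ∈ interviews M ι κ := by
    intro e g hσg
    rcases (hσmem e g).mp hσg with ⟨ha, -⟩ | ⟨ha, hb⟩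
    · exact finalMatch_V ha
    · obtain ⟨g₀, hg₀, hpref⟩ := (memA e).mp hb
      have hgg : g₀ = g := finalMatch_unique_d hM hg₀ ha
      subst hgg
      obtain ⟨h₀, hh₀⟩ := matchedA e hb
      exact interviews_dichotomy hκ (finalMatch_V ha) (finalMatch_V hh₀)
        (hpref h₀ hh₀)
  have hσstab : ∀ g e, (g, e) ∈ interviews M ι κ →
      (∀ h₀, (e, h₀) ∈ σ → M.rankDH e g < M.rankDH e h₀) →
      ∃ e₀, (e₀, g) ∈ σ ∧ M.rankHD g e₀ < M.rankHD g e := by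
    intro g e hgν hpref
    have prefμ : ∀ h, (e, h) ∈ finalMatch M (interviews M ι κ) →
        M.rankDH e g < M.rankDH e h := by
      intro h hh
      by_cases heA : e ∈ A
      · obtain ⟨g₀, hg₀, hp⟩ := (memA e).mp heA
        exact (hpref g₀ ((hσmem e g₀).mpr (Or.inr ⟨hg₀, heA⟩))).trans (hp h hh)
      · exact hpref h ((hσmem e h).mpr (Or.inl ⟨hh, heA⟩))
    have prefμ' : ∀ h, (e, h) ∈ finalMatch M (interviews M ι κ') →
        M.rankDH e g < M.rankDH e h := by
      intro h hh
      by_cases heA : e ∈ A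
      · obtain ⟨g₀, hg₀, -⟩ := (memA e).mp heA
        have hgh : g₀ = h := finalMatch_unique_d hM hg₀ hh
        subst hgh
        exact hpref g₀ ((hσmem e g₀).mpr (Or.inr ⟨hg₀, heA⟩))
      · have h2 : ∃ h₂, (e, h₂) ∈ finalMatch M (interviews M ι κ) ∧
            M.rankDH e h₂ ≤ M.rankDH e h := by
          by_contra hcon
          push_neg at hcon
          exact heA ((memA e).mpr ⟨h, hh, fun h₂ hh₂ => hcon h₂ hh₂⟩)
        obtain ⟨h₂, hh₂, hle⟩ := h2
        exact (prefμ h₂ hh₂).trans_le hle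
    obtain ⟨e₁, he₁μ, hlt₁⟩ : ∃ e₁, (e₁, g) ∈ finalMatch M (interviews M ι κ) ∧
        M.rankHD g e₁ < M.rankHD g e := by
      by_cases hrej : (e, g) ∈ mRej M (interviews M ι κ)
      · exact mRej_justified hrej
      · obtain ⟨hsp, hh, hle⟩ := finalMatch_exists_better hgν hrej
        exact absurd (prefμ hsp hh) (not_lt.mpr hle)
    by_cases he₁A : e₁ ∈ A
    · have hgHA : g ∈ HAk := by
        rw [hHAdef, mem_image]
        exact ⟨(e₁, g), mem_filter.mpr ⟨he₁μ, he₁A⟩, rfl⟩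
      rw [← hHAeq, hHA'def, mem_image] at hgHA
      obtain ⟨⟨e₂, g₂⟩, hp, hpe⟩ := hgHA
      dsimp at hpe
      rw [hMf', mem_filter] at hp
      rw [hpe] at hp
      obtain ⟨he₂μ', he₂A⟩ := hp
      refine ⟨e₂, (hσmem e₂ g).mpr (Or.inr ⟨he₂μ', he₂A⟩), ?_⟩
      by_cases hgν' : (g, e) ∈ interviews M ι κ'
      · by_cases hrej' : (e, g) ∈ mRej M (interviews M ι κ')
        · obtain ⟨e₃, he₃, hlt₃⟩ := mRej_justified hrej'
          have : e₃ = e₂ := finalMatch_unique_h hM he₃ he₂μ'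
          rwa [this] at hlt₃
        · obtain ⟨hsp, hh, hle⟩ := finalMatch_exists_better hgν' hrej'
          exact absurd (prefμ' hsp hh) (not_lt.mpr hle)
      · exact interviews_hdichot hM hκ hgν hgν' (finalMatch_V he₂μ')
    · exact ⟨e₁, (hσmem e₁ g).mpr (Or.inl ⟨he₁μ, he₁A⟩), hlt₁⟩
  -- apply doctor-optimality of the κ-matching within the κ-interviews
  obtain ⟨g_d, hg_d, hpref_d⟩ := (memA d).mp hdA
  have hσd : (d, g_d) ∈ σ := (hσmem d g_d).mpr (Or.inr ⟨hg_d, hdA⟩)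
  obtain ⟨h₀, hh₀, hle₀⟩ :=
    finalMatch_doctor_optimal hM σ hσh hσV hσstab d g_d hσd
  exact absurd (hpref_d h₀ hh₀) (not_lt.mpr hle₀)

end MoreInterviewsAux

/-- Starting at an adequate arrangement, doctors do not benefit from
increases to their interview capacities: if `(ι,κ)` is adequate at `P` and
`κ' ≥ κ` pointwise, then every doctor weakly prefers the `(ι,κ)`-matching to the
`(ι,κ')`-matching (if `d` is matched to `h'` under `κ'`, then under `κ` she is
matched to some `h` she weakly prefers to `h'`). -/
theorem more_interviews_not_better
    (M : Market D H) (hM : M.Strict) (ι : H → ℕ) (κ κ' : D → ℕ)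
    (hadq : Adequate M ι κ) (hκ : ∀ d, κ d ≤ κ' d) :
    ∀ (d : D) (h' : H), (d, h') ∈ ikMatching M ι κ' →
      ∃ h : H, (d, h) ∈ ikMatching M ι κ ∧ M.rankDH d h ≤ M.rankDH d h' :=
  MoreInterviewsAux.main_aux M hM ι κ κ' hadq hκ
end

section
/- If an arrangement (ι,κ) is globally adequate (adequate at every preference profile) and some doctor has interview capacity greater than one, then every doctor has interview capacity at least two and every hospital has interview capacity at least two. -/
set_option linter.unusedSectionVars false


/- Formal model of the two-step interview-then-match process of
Echenique-et-al-style markets: Step 1 computes the interview matching by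
hospital-proposing deferred acceptance (with responsive, capacity-constrained
choice functions); Step 2 computes the final one-to-one matching by
doctor-proposing deferred acceptance on preferences restricted to interview
partners. -/

open Finset

variable {D H : Type*} [Fintype D] [Fintype H] [DecidableEq D] [DecidableEq H]


/-! ### Auxiliary lemmas -/

lemma topN_empty' {α : Type*} [DecidableEq α] (r : α → ℕ) (n : ℕ) :
    topN r n (∅ : Finset α) = ∅ := by simp [topN]

lemma topN_zero' {α : Type*} [DecidableEq α] (r : α → ℕ) (s : Finset α) :
    topN r 0 s = ∅ := by simp [topN]

lemma topN_of_card_le {α : Type*} [DecidableEq α] (r : α → ℕ) {n : ℕ} {s : Finset α}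
    (h : s.card ≤ n) : topN r n s = s := by
  unfold topN
  rw [Finset.filter_eq_self]
  intro x hx
  calc (s.filter fun y => r y < r x).card
      ≤ (s.erase x).card := by
        apply Finset.card_le_card
        intro y hy
        simp only [Finset.mem_filter] at hy
        rw [Finset.mem_erase]
        exact ⟨fun e => by subst e; omega, hy.1⟩
    _ < s.card := Finset.card_erase_lt_of_mem hx
    _ ≤ n := h

lemma topN_singleton' {α : Type*} [DecidableEq α] (r : α → ℕ) {n : ℕ} (hn : 0 < n) (a : α) :
    topN r n ({a} : Finset α) = {a} := topN_of_card_le r (by simpa)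

lemma topN_pair_one {α : Type*} [DecidableEq α] (r : α → ℕ) {a b : α} (hab : a ≠ b)
    (hr : r a < r b) : topN r 1 ({a, b} : Finset α) = {a} := by
  ext x
  simp only [topN, Finset.mem_filter, Finset.mem_insert, Finset.mem_singleton]
  constructor
  · rintro ⟨hx | hx, hc⟩
    · exact hx
    · exfalso
      subst hx
      have : a ∈ ({a, x} : Finset α).filter fun y => r y < r x :=
        Finset.mem_filter.mpr ⟨by simp, hr⟩
      have := Finset.card_pos.mpr ⟨a, this⟩
      omega
  · rintro rfl
    refine ⟨Or.inl rfl, ?_⟩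
    have : (({x, b} : Finset α).filter fun y => r y < r x) = ∅ := by
      rw [Finset.filter_eq_empty_iff]
      intro y hy
      rw [Finset.mem_insert, Finset.mem_singleton] at hy
      rcases hy with rfl | rfl
      · omega
      · omega
    rw [this]; simp

lemma iterate_fixed_of_one {α : Type*} {f : α → α} {x y : α} (h1 : f x = y) (h2 : f y = y)
    {n : ℕ} (hn : 1 ≤ n) : f^[n] x = y := by
  obtain ⟨m, rfl⟩ := Nat.exists_eq_add_of_le hn
  rw [add_comm, Function.iterate_add_apply, Function.iterate_one, h1,
    Function.iterate_fixed h2]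

/-- Rank function putting `a` first, `b` second. -/
noncomputable def rk2 {α : Type*} [Fintype α] [DecidableEq α] (a b x : α) : ℕ :=
  if x = a then 0 else if x = b then 1 else (Fintype.equivFin α x : ℕ) + 2

lemma rk2_a {α : Type*} [Fintype α] [DecidableEq α] (a b : α) : rk2 a b a = 0 := by
  simp [rk2]

lemma rk2_b {α : Type*} [Fintype α] [DecidableEq α] {a b : α} (hab : a ≠ b) :
    rk2 a b b = 1 := by simp [rk2, hab.symm]

lemma rk2_inj {α : Type*} [Fintype α] [DecidableEq α] (a b : α) :
    Function.Injective (rk2 a b) := by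
  intro x y h
  unfold rk2 at h
  split_ifs at h with h1 h2 h3 h4 h5 h6 <;>
    first
      | (subst_vars; rfl)
      | omega
      | exact (Fintype.equivFin _).injective (Fin.val_injective (by omega))

lemma equivFin_nat_inj {α : Type*} [Fintype α] [DecidableEq α] :
    Function.Injective (fun x : α => ((Fintype.equivFin α x : ℕ))) := by
  intro x y h
  exact (Fintype.equivFin _).injective (Fin.val_injective h)


/-- Market where only the pair `(dx, hx)` is mutually acceptable. -/
noncomputable def mkA (dx : D) (hx : H) : Market D H where
  rankDH := fun _ h => (Fintype.equivFin H h : ℕ)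
  accD := fun d h => decide (d = dx ∧ h = hx)
  rankHD := fun _ d => (Fintype.equivFin D d : ℕ)
  accH := fun h d => decide (d = dx ∧ h = hx)

lemma mkA_strict (dx : D) (hx : H) : (mkA dx hx).Strict :=
  ⟨fun _ => equivFin_nat_inj, fun _ => equivFin_nat_inj⟩

/-- Rectangle market: `{d0, d1} × {hA, hB}` mutually acceptable, all doctors rank
`hA` first, `hB` second; all hospitals rank `d0` first, `d1` second. -/
noncomputable def mkR (d0 d1 : D) (hA hB : H) : Market D H where
  rankDH := fun _ => rk2 hA hB
  accD := fun d h => decide ((d = d0 ∨ d = d1) ∧ (h = hA ∨ h = hB))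
  rankHD := fun _ => rk2 d0 d1
  accH := fun h d => decide ((d = d0 ∨ d = d1) ∧ (h = hA ∨ h = hB))

lemma mkR_strict (d0 d1 : D) (hA hB : H) : (mkR d0 d1 hA hB).Strict :=
  ⟨fun _ => rk2_inj hA hB, fun _ => rk2_inj d0 d1⟩

lemma dProps_of_empty (M : Market D H) (S : Finset (D × H)) (d : D) :
    dProps M ∅ S d = ∅ := by
  have : (univ.filter fun h : H => ((h, d) ∈ (∅ : Finset (H × D))) ∧ (d, h) ∉ S) = ∅ := by
    simp
  unfold dProps
  rw [this, topN_empty']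

lemma finalMatch_of_empty (M : Market D H) : finalMatch M ∅ = ∅ := by
  unfold finalMatch
  rw [Finset.filter_eq_empty_iff]
  intro p _
  rw [dProps_of_empty]
  simp

lemma mkA_interviews_kappa {dx : D} {hx : H} (ι : H → ℕ) (κ : D → ℕ) (hκ : κ dx = 0) :
    interviews (mkA dx hx) ι κ = ∅ := by
  have hdk : ∀ R d, dKeeps (mkA dx hx) ι κ R d = ∅ := by
    intro R d
    by_cases hd : d = dx
    · subst hd; unfold dKeeps; rw [hκ, topN_zero']
    · unfold dKeeps
      have : (univ.filter fun h : H =>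
          ((mkA dx hx).accD d h : Prop) ∧ d ∈ hProps (mkA dx hx) ι R h) = ∅ := by
        rw [Finset.filter_eq_empty_iff]
        intro h _
        simp [mkA, hd]
      rw [this, topN_empty']
  unfold interviews
  rw [Finset.filter_eq_empty_iff]
  intro p _
  rw [hdk]
  simp

lemma mkA_interviews_iota {dx : D} {hx : H} (ι : H → ℕ) (κ : D → ℕ) (hι : ι hx = 0) :
    interviews (mkA dx hx) ι κ = ∅ := by
  have hhp : ∀ R h, hProps (mkA dx hx) ι R h = ∅ := by
    intro R h
    by_cases hh : h = hx
    · subst hh; unfold hProps; rw [hι, topN_zero']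
    · unfold hProps
      have : (univ.filter fun d : D =>
          ((mkA dx hx).accH h d : Prop) ∧ (h, d) ∉ R) = ∅ := by
        rw [Finset.filter_eq_empty_iff]
        intro d _
        simp [mkA, hh]
      rw [this, topN_empty']
  unfold interviews
  rw [Finset.filter_eq_empty_iff]
  intro p _
  rw [hhp]
  simp

lemma mkA_blocks {dx : D} {hx : H} {ι : H → ℕ} {κ : D → ℕ}
    (h : interviews (mkA dx hx) ι κ = ∅) : ¬ Adequate (mkA dx hx) ι κ := by
  intro had
  have hm : ikMatching (mkA dx hx) ι κ = ∅ := by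
    unfold ikMatching
    rw [h, finalMatch_of_empty]
  exact had dx hx (by
    rw [hm]
    refine ⟨by simp [mkA], by simp [mkA], by simp, by simp, by simp⟩)

lemma kappa_pos (hH : 2 ≤ Fintype.card H) (ι : H → ℕ) (κ : D → ℕ)
    (hga : GloballyAdequate D H ι κ) (d : D) :
    1 ≤ κ d := by
  by_contra hlt
  obtain ⟨h⟩ : Nonempty H := ⟨(Fintype.equivFin H).symm ⟨0, by omega⟩⟩
  · exact mkA_blocks (mkA_interviews_kappa ι κ (by omega)) (hga _ (mkA_strict d h))

lemma iota_pos (hD : 2 ≤ Fintype.card D) (ι : H → ℕ) (κ : D → ℕ)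
    (hga : GloballyAdequate D H ι κ) (h : H) : 1 ≤ ι h := by
  by_contra hlt
  obtain ⟨d⟩ : Nonempty D := ⟨(Fintype.equivFin D).symm ⟨0, by omega⟩⟩
  · exact mkA_blocks (mkA_interviews_iota ι κ (by omega)) (hga _ (mkA_strict d h))



lemma mkR_accD_iff (d0 d1 : D) (hA hB : H) (d : D) (h : H) :
    (mkR d0 d1 hA hB).accD d h = true ↔ (d = d0 ∨ d = d1) ∧ (h = hA ∨ h = hB) := by
  simp [mkR]

lemma mkR_accH_iff (d0 d1 : D) (hA hB : H) (h : H) (d : D) :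
    (mkR d0 d1 hA hB).accH h d = true ↔ (d = d0 ∨ d = d1) ∧ (h = hA ∨ h = hB) := by
  simp [mkR]

lemma mkR_hProps_out (d0 d1 : D) (hA hB : H) (ι : H → ℕ) {h : H}
    (hx : ¬(h = hA ∨ h = hB)) (R : Finset (H × D)) :
    hProps (mkR d0 d1 hA hB) ι R h = ∅ := by
  unfold hProps
  have hbase : (univ.filter fun d : D => (mkR d0 d1 hA hB).accH h d ∧ (h, d) ∉ R) = ∅ := by
    rw [Finset.filter_eq_empty_iff]
    intro d _
    rintro ⟨hacc, -⟩
    rw [mkR_accH_iff] at hacc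
    exact hx hacc.2
  rw [hbase, topN_empty']

lemma mkR_hProps_in (d0 d1 : D) (hA hB : H) (ι : H → ℕ) {h : H}
    (hx : h = hA ∨ h = hB) (R : Finset (H × D)) :
    hProps (mkR d0 d1 hA hB) ι R h =
      topN (rk2 d0 d1) (ι h) (({d0, d1} : Finset D).filter fun d => (h, d) ∉ R) := by
  unfold hProps
  have hrk : (mkR d0 d1 hA hB).rankHD h = rk2 d0 d1 := rfl
  rw [hrk]
  congr 1
  ext d
  simp only [Finset.mem_filter, Finset.mem_univ, true_and, Finset.mem_insert,
    Finset.mem_singleton, mkR_accH_iff]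
  tauto

lemma mkR_dKeeps_out (d0 d1 : D) (hA hB : H) (ι : H → ℕ) (κ : D → ℕ) {d : D}
    (hx : ¬(d = d0 ∨ d = d1)) (R : Finset (H × D)) :
    dKeeps (mkR d0 d1 hA hB) ι κ R d = ∅ := by
  unfold dKeeps
  have hbase : (univ.filter fun h : H =>
      (mkR d0 d1 hA hB).accD d h ∧ d ∈ hProps (mkR d0 d1 hA hB) ι R h) = ∅ := by
    rw [Finset.filter_eq_empty_iff]
    intro h _
    rintro ⟨hacc, -⟩
    rw [mkR_accD_iff] at hacc
    exact hx hacc.1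
  rw [hbase, topN_empty']

lemma mkR_dKeeps_in (d0 d1 : D) (hA hB : H) (ι : H → ℕ) (κ : D → ℕ) {d : D}
    (hx : d = d0 ∨ d = d1) (R : Finset (H × D)) :
    dKeeps (mkR d0 d1 hA hB) ι κ R d =
      topN (rk2 hA hB) (κ d)
        (({hA, hB} : Finset H).filter fun h => d ∈ hProps (mkR d0 d1 hA hB) ι R h) := by
  unfold dKeeps
  have hrk : (mkR d0 d1 hA hB).rankDH d = rk2 hA hB := rfl
  rw [hrk]
  congr 1
  ext h
  simp only [Finset.mem_filter, Finset.mem_univ, true_and, Finset.mem_insert,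
    Finset.mem_singleton, mkR_accD_iff]
  constructor
  · rintro ⟨hacc, hp⟩
    exact ⟨hacc.2, hp⟩
  · rintro ⟨hor, hp⟩
    exact ⟨⟨hx, hor⟩, hp⟩

lemma mkR_dProps (d0 d1 : D) (hA hB : H) (V : Finset (H × D)) (S : Finset (D × H)) (d : D) :
    dProps (mkR d0 d1 hA hB) V S d =
      topN (rk2 hA hB) 1 (univ.filter fun h => (h, d) ∈ V ∧ (d, h) ∉ S) := rfl

lemma mkR_hKeeps (d0 d1 : D) (hA hB : H) (V : Finset (H × D)) (S : Finset (D × H)) (h : H) :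
    hKeeps (mkR d0 d1 hA hB) V S h =
      topN (rk2 d0 d1) 1 (univ.filter fun d => h ∈ dProps (mkR d0 d1 hA hB) V S d) := rfl

lemma card_DH_pos (d : D) (h : H) : 1 ≤ Fintype.card D * Fintype.card H :=
  Nat.mul_pos (Fintype.card_pos_iff.mpr ⟨d⟩) (Fintype.card_pos_iff.mpr ⟨h⟩)

lemma pair_card_two {α : Type*} [DecidableEq α] {a b : α} (h : a ≠ b) :
    ({a, b} : Finset α).card = 2 := by
  rw [Finset.card_insert_of_notMem (by simpa using h), Finset.card_singleton]


lemma mkB_ik {d0 d1 : D} {h1 h2 : H} (hd : d0 ≠ d1) (hh : h1 ≠ h2)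
    (ι : H → ℕ) (κ : D → ℕ) (hκ0 : 2 ≤ κ d0) (hκ1 : 1 ≤ κ d1)
    (hι1 : ι h1 = 1) (hι2 : 1 ≤ ι h2) :
    ikMatching (mkR d0 d1 h2 h1) ι κ = {(d0, h2)} := by
  have hfe : ∀ h : H, (({d0, d1} : Finset D).filter fun d => (h, d) ∉ (∅ : Finset (H × D)))
      = {d0, d1} := by intro h; simp
  have hr01 : rk2 d0 d1 d0 < rk2 d0 d1 d1 := by rw [rk2_a, rk2_b hd]; omega
  have hr21 : rk2 h2 h1 h2 < rk2 h2 h1 h1 := by rw [rk2_a, rk2_b hh.symm]; omega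
  have hpA : hProps (mkR d0 d1 h2 h1) ι ∅ h1 = {d0} := by
    rw [mkR_hProps_in d0 d1 h2 h1 ι (Or.inr rfl) ∅, hfe, hι1]
    exact topN_pair_one _ hd hr01
  -- hospital h2's proposals: two cases
  have hp2cases : hProps (mkR d0 d1 h2 h1) ι ∅ h2 = {d0} ∨
      hProps (mkR d0 d1 h2 h1) ι ∅ h2 = {d0, d1} := by
    rcases Nat.lt_or_ge (ι h2) 2 with hc | hc
    · left
      have : ι h2 = 1 := by omega
      rw [mkR_hProps_in d0 d1 h2 h1 ι (Or.inl rfl) ∅, hfe, this]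
      exact topN_pair_one _ hd hr01
    · right
      rw [mkR_hProps_in d0 d1 h2 h1 ι (Or.inl rfl) ∅, hfe]
      exact topN_of_card_le _ (by rw [pair_card_two hd]; omega)
  have hd0mem : ∀ h, h = h1 ∨ h = h2 → d0 ∈ hProps (mkR d0 d1 h2 h1) ι ∅ h := by
    rintro h (rfl | rfl)
    · rw [hpA]; simp
    · rcases hp2cases with e | e <;> rw [e] <;> simp
  have dk0 : dKeeps (mkR d0 d1 h2 h1) ι κ ∅ d0 = {h2, h1} := by
    rw [mkR_dKeeps_in d0 d1 h2 h1 ι κ (Or.inl rfl) ∅]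
    have hbase : (({h2, h1} : Finset H).filter
        fun h => d0 ∈ hProps (mkR d0 d1 h2 h1) ι ∅ h) = {h2, h1} := by
      rw [Finset.filter_true_of_mem]
      intro h hm
      rw [Finset.mem_insert, Finset.mem_singleton] at hm
      exact hd0mem h hm.symm
    rw [hbase]
    exact topN_of_card_le _ (by rw [pair_card_two hh.symm]; omega)
  have dk1 : dKeeps (mkR d0 d1 h2 h1) ι κ ∅ d1 =
      (if d1 ∈ hProps (mkR d0 d1 h2 h1) ι ∅ h2 then {h2} else ∅) := by
    rw [mkR_dKeeps_in d0 d1 h2 h1 ι κ (Or.inr rfl) ∅]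
    have hbase : (({h2, h1} : Finset H).filter
        fun h => d1 ∈ hProps (mkR d0 d1 h2 h1) ι ∅ h) =
        (if d1 ∈ hProps (mkR d0 d1 h2 h1) ι ∅ h2 then {h2} else ∅) := by
      by_cases hc : d1 ∈ hProps (mkR d0 d1 h2 h1) ι ∅ h2
      · rw [if_pos hc]
        ext h
        simp only [Finset.mem_filter, Finset.mem_insert, Finset.mem_singleton]
        constructor
        · rintro ⟨rfl | rfl, hm⟩
          · rfl
          · rw [hpA, Finset.mem_singleton] at hm
            exact absurd hm.symm hd
        · rintro rfl
          exact ⟨Or.inl rfl, hc⟩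
      · rw [if_neg hc, Finset.filter_eq_empty_iff]
        intro h hm
        rw [Finset.mem_insert, Finset.mem_singleton] at hm
        rcases hm with rfl | rfl
        · exact hc
        · intro hm2
          rw [hpA, Finset.mem_singleton] at hm2
          exact hd hm2.symm
    rw [hbase]
    split_ifs with hc
    · exact topN_singleton' _ (by omega) _
    · exact topN_empty' _ _
  have istep : iStep (mkR d0 d1 h2 h1) ι κ ∅ = ∅ := by
    unfold iStep
    rw [Finset.empty_union, Finset.filter_eq_empty_iff]
    rintro ⟨h, d⟩ -
    rintro ⟨hin, hout⟩
    simp only at hin hout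
    by_cases e1 : h = h1
    · subst e1
      rw [hpA, Finset.mem_singleton] at hin
      subst hin
      rw [dk0] at hout
      simp at hout
    · by_cases e2 : h = h2
      · subst e2
        rcases hp2cases with e | e
        · rw [e, Finset.mem_singleton] at hin
          subst hin
          rw [dk0] at hout
          simp at hout
        · rw [e, Finset.mem_insert, Finset.mem_singleton] at hin
          rcases hin with rfl | rfl
          · rw [dk0] at hout; simp at hout
          · rw [dk1, if_pos (by rw [e]; simp)] at hout
            simp at hout
      · rw [mkR_hProps_out d0 d1 h2 h1 ι (by tauto) ∅] at hin
        exact absurd hin (Finset.notMem_empty _)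
  have irej : iRej (mkR d0 d1 h2 h1) ι κ = ∅ := by
    unfold iRej
    exact Function.iterate_fixed istep _
  -- the interviews
  have hiv : interviews (mkR d0 d1 h2 h1) ι κ =
      insert (h1, d0) (insert (h2, d0)
        (if d1 ∈ hProps (mkR d0 d1 h2 h1) ι ∅ h2 then {(h2, d1)} else ∅)) := by
    unfold interviews
    rw [irej]
    ext ⟨h, d⟩
    simp only [Finset.mem_filter, Finset.mem_univ, true_and, Finset.mem_insert,
      Prod.mk.injEq]
    constructor
    · rintro ⟨hin, hkp⟩
      by_cases e1 : h = h1
      · subst e1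
        rw [hpA, Finset.mem_singleton] at hin
        tauto
      · by_cases e2 : h = h2
        · subst e2
          rcases hp2cases with e | e <;> rw [e] at hin
          · rw [Finset.mem_singleton] at hin; tauto
          · rw [Finset.mem_insert, Finset.mem_singleton] at hin
            rcases hin with rfl | rfl
            · tauto
            · right; right
              rw [e]
              simp
        · rw [mkR_hProps_out d0 d1 h2 h1 ι (by tauto) ∅] at hin
          exact absurd hin (Finset.notMem_empty _)
    · intro hx
      rcases hx with ⟨rfl, rfl⟩ | ⟨rfl, rfl⟩ | hx
      · exact ⟨hd0mem h (Or.inl rfl), by rw [dk0]; simp⟩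
      · exact ⟨hd0mem h (Or.inr rfl), by rw [dk0]; simp⟩
      · split_ifs at hx with hc
        · rw [Finset.mem_singleton, Prod.mk.injEq] at hx
          obtain ⟨rfl, rfl⟩ := hx
          exact ⟨hc, by rw [dk1, if_pos hc]; simp⟩
        · exact absurd hx (Finset.notMem_empty _)
  set V := interviews (mkR d0 d1 h2 h1) ι κ with hV
  have hVd0 : ∀ h : H, (h, d0) ∈ V ↔ (h = h1 ∨ h = h2) := by
    intro h
    rw [hiv]
    simp only [Finset.mem_insert, Prod.mk.injEq]
    constructor
    · intro hx
      rcases hx with ⟨rfl, -⟩ | ⟨rfl, -⟩ | hx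
      · tauto
      · tauto
      · split_ifs at hx with hc
        · rw [Finset.mem_singleton, Prod.mk.injEq] at hx
          exact absurd hx.2 hd
        · exact absurd hx (Finset.notMem_empty _)
    · rintro (rfl | rfl) <;> tauto
  have hVd1 : ∀ h : H, (h, d1) ∈ V →
      (h = h2 ∧ d1 ∈ hProps (mkR d0 d1 h2 h1) ι ∅ h2) := by
    intro h hx
    rw [hiv] at hx
    simp only [Finset.mem_insert, Prod.mk.injEq] at hx
    rcases hx with ⟨-, hx⟩ | ⟨-, hx⟩ | hx
    · exact absurd hx.symm hd
    · exact absurd hx.symm hd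
    · split_ifs at hx with hc
      · rw [Finset.mem_singleton, Prod.mk.injEq] at hx
        exact ⟨hx.1, hc⟩
      · exact absurd hx (Finset.notMem_empty _)
  have hVd : ∀ (h : H) (d : D), (h, d) ∈ V → d = d0 ∨ d = d1 := by
    intro h d hx
    rw [hiv] at hx
    simp only [Finset.mem_insert, Prod.mk.injEq] at hx
    rcases hx with ⟨-, hx⟩ | ⟨-, hx⟩ | hx
    · exact Or.inl hx
    · exact Or.inl hx
    · split_ifs at hx with hc
      · rw [Finset.mem_singleton, Prod.mk.injEq] at hx
        exact Or.inr hx.2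
      · exact absurd hx (Finset.notMem_empty _)
  -- doctor proposals at any S not containing (d0, ·)
  have dp0 : ∀ S : Finset (D × H), (∀ h, (d0, h) ∉ S) →
      dProps (mkR d0 d1 h2 h1) V S d0 = {h2} := by
    intro S hS
    rw [mkR_dProps]
    have hbase : (univ.filter fun h : H => (h, d0) ∈ V ∧ (d0, h) ∉ S) = {h2, h1} := by
      ext h
      simp only [Finset.mem_filter, Finset.mem_univ, true_and, Finset.mem_insert,
        Finset.mem_singleton, hVd0]
      constructor
      · rintro ⟨hx, -⟩; tauto
      · rintro (rfl | rfl) <;> exact ⟨by tauto, hS _⟩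
    rw [hbase]
    exact topN_pair_one _ hh.symm hr21
  have dpx : ∀ (S : Finset (D × H)) (d : D), d ≠ d0 → d ≠ d1 →
      dProps (mkR d0 d1 h2 h1) V S d = ∅ := by
    intro S d e0 e1
    rw [mkR_dProps]
    have hbase : (univ.filter fun h : H => (h, d) ∈ V ∧ (d, h) ∉ S) = ∅ := by
      rw [Finset.filter_eq_empty_iff]
      intro h _
      rintro ⟨hin, -⟩
      rcases hVd h d hin with rfl | rfl
      · exact e0 rfl
      · exact e1 rfl
    rw [hbase, topN_empty']
  have dp1sub : ∀ (S : Finset (D × H)), dProps (mkR d0 d1 h2 h1) V S d1 ⊆ {h2} := by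
    intro S
    rw [mkR_dProps]
    intro h hm
    have hm' := (Finset.filter_subset _ _) ((Finset.filter_subset _ _) hm)
    have hm2 : h ∈ univ.filter fun h : H => (h, d1) ∈ V ∧ (d1, h) ∉ S := by
      exact (Finset.filter_subset _ _) hm
    rw [Finset.mem_filter] at hm2
    rw [Finset.mem_singleton]
    exact (hVd1 h hm2.2.1).1
  have hk2 : ∀ S : Finset (D × H), (∀ h, (d0, h) ∉ S) →
      hKeeps (mkR d0 d1 h2 h1) V S h2 = {d0} := by
    intro S hS
    rw [mkR_hKeeps]
    have hd0p : h2 ∈ dProps (mkR d0 d1 h2 h1) V S d0 := by rw [dp0 S hS]; simp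
    by_cases hc : h2 ∈ dProps (mkR d0 d1 h2 h1) V S d1
    · have hbase : (univ.filter fun d : D => h2 ∈ dProps (mkR d0 d1 h2 h1) V S d)
          = {d0, d1} := by
        ext d
        simp only [Finset.mem_filter, Finset.mem_univ, true_and, Finset.mem_insert,
          Finset.mem_singleton]
        constructor
        · intro hm
          by_contra hcon
          push_neg at hcon
          rw [dpx S d hcon.1 hcon.2] at hm
          exact absurd hm (Finset.notMem_empty _)
        · rintro (rfl | rfl)
          · exact hd0p
          · exact hc
      rw [hbase]
      exact topN_pair_one _ hd hr01
    · have hbase : (univ.filter fun d : D => h2 ∈ dProps (mkR d0 d1 h2 h1) V S d)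
          = {d0} := by
        ext d
        simp only [Finset.mem_filter, Finset.mem_univ, true_and, Finset.mem_singleton]
        constructor
        · intro hm
          by_contra hcon
          by_cases e1 : d = d1
          · subst e1; exact hc hm
          · rw [dpx S d hcon e1] at hm
            exact absurd hm (Finset.notMem_empty _)
        · rintro rfl; exact hd0p
      rw [hbase]
      exact topN_singleton' _ (by omega) _
  have hkx : ∀ (S : Finset (D × H)) (h : H), (∀ h', (d0, h') ∉ S) → h ≠ h2 →
      hKeeps (mkR d0 d1 h2 h1) V S h = ∅ := by
    intro S h hS hne
    rw [mkR_hKeeps]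
    have hbase : (univ.filter fun d : D => h ∈ dProps (mkR d0 d1 h2 h1) V S d) = ∅ := by
      rw [Finset.filter_eq_empty_iff]
      intro d _ hm
      by_cases e0 : d = d0
      · subst e0; rw [dp0 S hS, Finset.mem_singleton] at hm; exact hne hm
      · by_cases e1 : d = d1
        · subst e1
          have := dp1sub S hm
          rw [Finset.mem_singleton] at this
          exact hne this
        · rw [dpx S d e0 e1] at hm
          exact absurd hm (Finset.notMem_empty _)
    rw [hbase, topN_empty']
  -- matching-stage rejections: everything that happens is d1 rejected by h2 (possibly)
  have hSgood : ∀ S : Finset (D × H), (∀ h, (d0, h) ∉ S) →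
      (∀ h, (d0, h) ∉ mStep (mkR d0 d1 h2 h1) V S) ∧
        mStep (mkR d0 d1 h2 h1) V S ⊆ S ∪ {(d1, h2)} := by
    intro S hS
    constructor
    · intro h hm
      unfold mStep at hm
      rw [Finset.mem_union] at hm
      rcases hm with hm | hm
      · exact hS h hm
      · rw [Finset.mem_filter] at hm
        obtain ⟨-, hin, hout⟩ := hm
        simp only at hin hout
        rw [dp0 S hS, Finset.mem_singleton] at hin
        subst hin
        exact hout (by rw [hk2 S hS]; simp)
    · intro p hp
      unfold mStep at hp
      rw [Finset.mem_union] at hp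
      rw [Finset.mem_union]
      rcases hp with hp | hp
      · exact Or.inl hp
      · right
        obtain ⟨d, h⟩ := p
        rw [Finset.mem_filter] at hp
        obtain ⟨-, hin, hout⟩ := hp
        simp only at hin hout
        by_cases e0 : d = d0
        · subst e0
          rw [dp0 S hS, Finset.mem_singleton] at hin
          subst hin
          exact absurd (by rw [hk2 S hS]; simp) hout
        · by_cases e1 : d = d1
          · subst e1
            have := dp1sub S hin
            rw [Finset.mem_singleton] at this
            subst this
            simp
          · rw [dpx S d e0 e1] at hin
            exact absurd hin (Finset.notMem_empty _)
  have hmr : (∀ h, (d0, h) ∉ mRej (mkR d0 d1 h2 h1) V) ∧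
      mRej (mkR d0 d1 h2 h1) V ⊆ {(d1, h2)} := by
    unfold mRej
    have : ∀ n : ℕ, (∀ h, (d0, h) ∉ (mStep (mkR d0 d1 h2 h1) V)^[n] ∅) ∧
        (mStep (mkR d0 d1 h2 h1) V)^[n] ∅ ⊆ {(d1, h2)} := by
      intro n
      induction n with
      | zero => simp
      | succ n ih =>
        rw [Function.iterate_succ_apply']
        obtain ⟨ih1, ih2⟩ := ih
        obtain ⟨hg1, hg2⟩ := hSgood _ ih1
        exact ⟨hg1, hg2.trans (by
          intro p hp
          rw [Finset.mem_union] at hp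
          rcases hp with hp | hp
          · exact ih2 hp
          · exact hp)⟩
    exact this _
  have fm : finalMatch (mkR d0 d1 h2 h1) V = {(d0, h2)} := by
    unfold finalMatch
    ext ⟨d, h⟩
    simp only [Finset.mem_filter, Finset.mem_univ, true_and, Finset.mem_singleton,
      Prod.mk.injEq]
    constructor
    · rintro ⟨hin, hkp⟩
      by_cases e0 : d = d0
      · subst e0
        rw [dp0 _ hmr.1, Finset.mem_singleton] at hin
        exact ⟨rfl, hin⟩
      · exfalso
        by_cases e1 : d = d1
        · subst e1
          have hh2 := dp1sub _ hin
          rw [Finset.mem_singleton] at hh2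
          subst hh2
          rw [hk2 _ hmr.1, Finset.mem_singleton] at hkp
          exact e0 hkp
        · rw [dpx _ d e0 e1] at hin
          exact absurd hin (Finset.notMem_empty _)
    · rintro ⟨rfl, rfl⟩
      exact ⟨by rw [dp0 _ hmr.1]; simp, by rw [hk2 _ hmr.1]; simp⟩
  unfold ikMatching
  rw [← hV]
  exact fm


lemma mkC_ik {d0 d1 : D} {h1 h2 : H} (hd : d0 ≠ d1) (hh : h1 ≠ h2)
    (ι : H → ℕ) (κ : D → ℕ) (hκ0 : 2 ≤ κ d0) (hκ1 : κ d1 = 1)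
    (hι1 : 2 ≤ ι h1) (hι2 : 2 ≤ ι h2) :
    ikMatching (mkR d0 d1 h1 h2) ι κ = {(d0, h1)} := by
  have hfe : ∀ h : H, (({d0, d1} : Finset D).filter fun d => (h, d) ∉ (∅ : Finset (H × D)))
      = {d0, d1} := by intro h; simp
  have hr01 : rk2 d0 d1 d0 < rk2 d0 d1 d1 := by rw [rk2_a, rk2_b hd]; omega
  have hr12 : rk2 h1 h2 h1 < rk2 h1 h2 h2 := by rw [rk2_a, rk2_b hh]; omega
  have hp1 : hProps (mkR d0 d1 h1 h2) ι ∅ h1 = {d0, d1} := by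
    rw [mkR_hProps_in d0 d1 h1 h2 ι (Or.inl rfl) ∅, hfe]
    exact topN_of_card_le _ (by rw [pair_card_two hd]; omega)
  have hp2 : hProps (mkR d0 d1 h1 h2) ι ∅ h2 = {d0, d1} := by
    rw [mkR_hProps_in d0 d1 h1 h2 ι (Or.inr rfl) ∅, hfe]
    exact topN_of_card_le _ (by rw [pair_card_two hd]; omega)
  have dk0 : dKeeps (mkR d0 d1 h1 h2) ι κ ∅ d0 = {h1, h2} := by
    rw [mkR_dKeeps_in d0 d1 h1 h2 ι κ (Or.inl rfl) ∅]
    have hbase : (({h1, h2} : Finset H).filter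
        fun h => d0 ∈ hProps (mkR d0 d1 h1 h2) ι ∅ h) = {h1, h2} := by
      rw [Finset.filter_true_of_mem]
      intro h hm
      rw [Finset.mem_insert, Finset.mem_singleton] at hm
      rcases hm with rfl | rfl
      · rw [hp1]; simp
      · rw [hp2]; simp
    rw [hbase]
    exact topN_of_card_le _ (by rw [pair_card_two hh]; omega)
  have dk1 : dKeeps (mkR d0 d1 h1 h2) ι κ ∅ d1 = {h1} := by
    rw [mkR_dKeeps_in d0 d1 h1 h2 ι κ (Or.inr rfl) ∅]
    have hbase : (({h1, h2} : Finset H).filter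
        fun h => d1 ∈ hProps (mkR d0 d1 h1 h2) ι ∅ h) = {h1, h2} := by
      rw [Finset.filter_true_of_mem]
      intro h hm
      rw [Finset.mem_insert, Finset.mem_singleton] at hm
      rcases hm with rfl | rfl
      · rw [hp1]; simp
      · rw [hp2]; simp
    rw [hbase, hκ1]
    exact topN_pair_one _ hh hr12
  have istep1 : iStep (mkR d0 d1 h1 h2) ι κ ∅ = {(h2, d1)} := by
    unfold iStep
    rw [Finset.empty_union]
    ext ⟨h, d⟩
    simp only [Finset.mem_filter, Finset.mem_univ, true_and, Finset.mem_singleton,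
      Prod.mk.injEq]
    constructor
    · rintro ⟨hin, hout⟩
      by_cases e1 : h = h1
      · subst e1
        exfalso
        rw [hp1, Finset.mem_insert, Finset.mem_singleton] at hin
        rcases hin with rfl | rfl
        · rw [dk0] at hout; simp at hout
        · rw [dk1] at hout; simp at hout
      · by_cases e2 : h = h2
        · subst e2
          rw [hp2, Finset.mem_insert, Finset.mem_singleton] at hin
          rcases hin with rfl | rfl
          · exfalso; rw [dk0] at hout; simp at hout
          · exact ⟨rfl, rfl⟩
        · rw [mkR_hProps_out d0 d1 h1 h2 ι (by tauto) ∅] at hin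
          exact absurd hin (Finset.notMem_empty _)
    · rintro ⟨rfl, rfl⟩
      refine ⟨by rw [hp2]; simp, ?_⟩
      rw [dk1, Finset.mem_singleton]
      exact fun e => hh e.symm
  have hf1 : (({d0, d1} : Finset D).filter
      fun d => (h1, d) ∉ ({(h2, d1)} : Finset (H × D))) = {d0, d1} := by
    rw [Finset.filter_true_of_mem]
    intro d _
    rw [Finset.mem_singleton, Prod.mk.injEq]
    rintro ⟨e, -⟩
    exact hh e
  have hf2 : (({d0, d1} : Finset D).filter
      fun d => (h2, d) ∉ ({(h2, d1)} : Finset (H × D))) = {d0} := by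
    ext d
    simp only [Finset.mem_filter, Finset.mem_insert, Finset.mem_singleton, Prod.mk.injEq]
    constructor
    · rintro ⟨rfl | rfl, hn⟩
      · rfl
      · tauto
    · rintro rfl
      refine ⟨Or.inl rfl, ?_⟩
      rintro ⟨-, e⟩
      exact hd e
  have hp1' : hProps (mkR d0 d1 h1 h2) ι {(h2, d1)} h1 = {d0, d1} := by
    rw [mkR_hProps_in d0 d1 h1 h2 ι (Or.inl rfl) _, hf1]
    exact topN_of_card_le _ (by rw [pair_card_two hd]; omega)
  have hp2' : hProps (mkR d0 d1 h1 h2) ι {(h2, d1)} h2 = {d0} := by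
    rw [mkR_hProps_in d0 d1 h1 h2 ι (Or.inr rfl) _, hf2]
    exact topN_of_card_le _ (by rw [Finset.card_singleton]; omega)
  have dk0' : dKeeps (mkR d0 d1 h1 h2) ι κ {(h2, d1)} d0 = {h1, h2} := by
    rw [mkR_dKeeps_in d0 d1 h1 h2 ι κ (Or.inl rfl) _]
    have hbase : (({h1, h2} : Finset H).filter
        fun h => d0 ∈ hProps (mkR d0 d1 h1 h2) ι {(h2, d1)} h) = {h1, h2} := by
      rw [Finset.filter_true_of_mem]
      intro h hm
      rw [Finset.mem_insert, Finset.mem_singleton] at hm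
      rcases hm with rfl | rfl
      · rw [hp1']; simp
      · rw [hp2']; simp
    rw [hbase]
    exact topN_of_card_le _ (by rw [pair_card_two hh]; omega)
  have dk1' : dKeeps (mkR d0 d1 h1 h2) ι κ {(h2, d1)} d1 = {h1} := by
    rw [mkR_dKeeps_in d0 d1 h1 h2 ι κ (Or.inr rfl) _]
    have hbase : (({h1, h2} : Finset H).filter
        fun h => d1 ∈ hProps (mkR d0 d1 h1 h2) ι {(h2, d1)} h) = {h1} := by
      ext h
      simp only [Finset.mem_filter, Finset.mem_insert, Finset.mem_singleton]
      constructor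
      · rintro ⟨rfl | rfl, hm⟩
        · rfl
        · rw [hp2', Finset.mem_singleton] at hm
          exact absurd hm.symm hd
      · rintro rfl
        exact ⟨Or.inl rfl, by rw [hp1']; simp⟩
    rw [hbase]
    exact topN_singleton' _ (by omega) _
  have istep2 : iStep (mkR d0 d1 h1 h2) ι κ {(h2, d1)} = {(h2, d1)} := by
    unfold iStep
    have : (univ.filter fun p : H × D => p.2 ∈ hProps (mkR d0 d1 h1 h2) ι {(h2, d1)} p.1 ∧
        p.1 ∉ dKeeps (mkR d0 d1 h1 h2) ι κ {(h2, d1)} p.2) = ∅ := by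
      rw [Finset.filter_eq_empty_iff]
      rintro ⟨h, d⟩ -
      rintro ⟨hin, hout⟩
      by_cases e1 : h = h1
      · subst e1
        rw [hp1', Finset.mem_insert, Finset.mem_singleton] at hin
        rcases hin with rfl | rfl
        · rw [dk0'] at hout; simp at hout
        · rw [dk1'] at hout; simp at hout
      · by_cases e2 : h = h2
        · subst e2
          rw [hp2', Finset.mem_singleton] at hin
          subst hin
          rw [dk0'] at hout; simp at hout
        · rw [mkR_hProps_out d0 d1 h1 h2 ι (by tauto) _] at hin
          exact absurd hin (Finset.notMem_empty _)
    rw [this, Finset.union_empty]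
  have irej : iRej (mkR d0 d1 h1 h2) ι κ = {(h2, d1)} := by
    unfold iRej
    exact iterate_fixed_of_one istep1 istep2 (card_DH_pos d0 h1)
  have hiv : interviews (mkR d0 d1 h1 h2) ι κ =
      ({(h1, d0), (h1, d1), (h2, d0)} : Finset (H × D)) := by
    unfold interviews
    rw [irej]
    ext ⟨h, d⟩
    simp only [Finset.mem_filter, Finset.mem_univ, true_and, Finset.mem_insert,
      Finset.mem_singleton, Prod.mk.injEq]
    constructor
    · rintro ⟨hin, hkp⟩
      by_cases e1 : h = h1
      · subst e1
        rw [hp1', Finset.mem_insert, Finset.mem_singleton] at hin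
        tauto
      · by_cases e2 : h = h2
        · subst e2
          rw [hp2', Finset.mem_singleton] at hin
          tauto
        · rw [mkR_hProps_out d0 d1 h1 h2 ι (by tauto) _] at hin
          exact absurd hin (Finset.notMem_empty _)
    · rintro (⟨rfl, rfl⟩ | ⟨rfl, rfl⟩ | ⟨rfl, rfl⟩)
      · exact ⟨by rw [hp1']; simp, by rw [dk0']; simp⟩
      · exact ⟨by rw [hp1']; simp, by rw [dk1']; simp⟩
      · exact ⟨by rw [hp2']; simp, by rw [dk0']; simp⟩
  set V : Finset (H × D) := {(h1, d0), (h1, d1), (h2, d0)} with hVdef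
  have hVd0 : ∀ h : H, ((h, d0) ∈ V ↔ (h = h1 ∨ h = h2)) := by
    intro h
    simp only [hVdef, Finset.mem_insert, Finset.mem_singleton, Prod.mk.injEq]
    constructor
    · rintro (⟨rfl, -⟩ | ⟨-, e⟩ | ⟨rfl, -⟩)
      · exact Or.inl rfl
      · exact absurd e hd
      · exact Or.inr rfl
    · rintro (rfl | rfl) <;> tauto
  have hVd1 : ∀ h : H, ((h, d1) ∈ V ↔ h = h1) := by
    intro h
    simp only [hVdef, Finset.mem_insert, Finset.mem_singleton, Prod.mk.injEq]
    constructor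
    · rintro (⟨rfl, -⟩ | ⟨rfl, -⟩ | ⟨-, e⟩)
      · rfl
      · rfl
      · exact absurd e (Ne.symm hd)
    · rintro rfl; tauto
  have hVd : ∀ (h : H) (d : D), (h, d) ∈ V → d = d0 ∨ d = d1 := by
    intro h d hm
    simp only [hVdef, Finset.mem_insert, Finset.mem_singleton, Prod.mk.injEq] at hm
    tauto
  have dp0 : ∀ S : Finset (D × H), (∀ h, (d0, h) ∉ S) →
      dProps (mkR d0 d1 h1 h2) V S d0 = {h1} := by
    intro S hS
    rw [mkR_dProps]
    have hbase : (univ.filter fun h : H => (h, d0) ∈ V ∧ (d0, h) ∉ S) = {h1, h2} := by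
      ext h
      simp only [Finset.mem_filter, Finset.mem_univ, true_and, Finset.mem_insert,
        Finset.mem_singleton, hVd0]
      constructor
      · rintro ⟨hx, -⟩; exact hx
      · rintro (rfl | rfl) <;> exact ⟨by tauto, hS _⟩
    rw [hbase]
    exact topN_pair_one _ hh hr12
  have dpx : ∀ (S : Finset (D × H)) (d : D), d ≠ d0 → d ≠ d1 →
      dProps (mkR d0 d1 h1 h2) V S d = ∅ := by
    intro S d e0 e1
    rw [mkR_dProps]
    have hbase : (univ.filter fun h : H => (h, d) ∈ V ∧ (d, h) ∉ S) = ∅ := by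
      rw [Finset.filter_eq_empty_iff]
      intro h _
      rintro ⟨hin, -⟩
      rcases hVd h d hin with rfl | rfl
      · exact e0 rfl
      · exact e1 rfl
    rw [hbase, topN_empty']
  have dp1a : dProps (mkR d0 d1 h1 h2) V ∅ d1 = {h1} := by
    rw [mkR_dProps]
    have hbase : (univ.filter fun h : H => (h, d1) ∈ V ∧ (d1, h) ∉ (∅ : Finset (D × H)))
        = {h1} := by
      ext h
      simp only [Finset.mem_filter, Finset.mem_univ, true_and, Finset.notMem_empty,
        not_false_iff, and_true, Finset.mem_singleton, hVd1]
    rw [hbase]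
    exact topN_singleton' _ (by omega) _
  have dp1b : dProps (mkR d0 d1 h1 h2) V {(d1, h1)} d1 = ∅ := by
    rw [mkR_dProps]
    have hbase : (univ.filter fun h : H => (h, d1) ∈ V ∧ (d1, h) ∉ ({(d1, h1)} : Finset (D × H)))
        = ∅ := by
      rw [Finset.filter_eq_empty_iff]
      intro h _
      rintro ⟨hin, hnot⟩
      rw [hVd1] at hin
      subst hin
      exact hnot (by simp)
    rw [hbase, topN_empty']
  have hd0nS : ∀ h : H, (d0, h) ∉ ({(d1, h1)} : Finset (D × H)) := by
    intro h
    rw [Finset.mem_singleton, Prod.mk.injEq]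
    rintro ⟨e, -⟩
    exact hd e
  have hk1a : hKeeps (mkR d0 d1 h1 h2) V ∅ h1 = {d0} := by
    rw [mkR_hKeeps]
    have hbase : (univ.filter fun d : D => h1 ∈ dProps (mkR d0 d1 h1 h2) V ∅ d)
        = {d0, d1} := by
      ext d
      simp only [Finset.mem_filter, Finset.mem_univ, true_and, Finset.mem_insert,
        Finset.mem_singleton]
      constructor
      · intro hm
        by_contra hcon
        push_neg at hcon
        rw [dpx ∅ d hcon.1 hcon.2] at hm
        exact absurd hm (Finset.notMem_empty _)
      · rintro (rfl | rfl)
        · rw [dp0 ∅ (by simp)]; simp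
        · rw [dp1a]; simp
    rw [hbase]
    exact topN_pair_one _ hd hr01
  have hk1b : hKeeps (mkR d0 d1 h1 h2) V {(d1, h1)} h1 = {d0} := by
    rw [mkR_hKeeps]
    have hbase : (univ.filter fun d : D => h1 ∈ dProps (mkR d0 d1 h1 h2) V {(d1, h1)} d)
        = {d0} := by
      ext d
      simp only [Finset.mem_filter, Finset.mem_univ, true_and, Finset.mem_singleton]
      constructor
      · intro hm
        by_cases e0 : d = d0
        · exact e0
        · by_cases e1 : d = d1
          · subst e1
            rw [dp1b] at hm
            exact absurd hm (Finset.notMem_empty _)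
          · rw [dpx _ d e0 e1] at hm
            exact absurd hm (Finset.notMem_empty _)
      · rintro rfl
        rw [dp0 _ hd0nS]; simp
    rw [hbase]
    exact topN_singleton' _ (by omega) _
  have mstep1 : mStep (mkR d0 d1 h1 h2) V ∅ = {(d1, h1)} := by
    unfold mStep
    rw [Finset.empty_union]
    ext ⟨d, h⟩
    simp only [Finset.mem_filter, Finset.mem_univ, true_and, Finset.mem_singleton,
      Prod.mk.injEq]
    constructor
    · rintro ⟨hin, hout⟩
      by_cases e0 : d = d0
      · subst e0
        rw [dp0 ∅ (by simp), Finset.mem_singleton] at hin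
        subst hin
        exact absurd (by rw [hk1a]; simp) hout
      · by_cases e1 : d = d1
        · subst e1
          rw [dp1a, Finset.mem_singleton] at hin
          exact ⟨rfl, hin⟩
        · rw [dpx ∅ d e0 e1] at hin
          exact absurd hin (Finset.notMem_empty _)
    · rintro ⟨rfl, rfl⟩
      refine ⟨by rw [dp1a]; simp, ?_⟩
      rw [hk1a, Finset.mem_singleton]
      exact fun e => hd e.symm
  have mstep2 : mStep (mkR d0 d1 h1 h2) V {(d1, h1)} = {(d1, h1)} := by
    unfold mStep
    have : (univ.filter fun p : D × H =>
        p.2 ∈ dProps (mkR d0 d1 h1 h2) V {(d1, h1)} p.1 ∧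
        p.1 ∉ hKeeps (mkR d0 d1 h1 h2) V {(d1, h1)} p.2) = ∅ := by
      rw [Finset.filter_eq_empty_iff]
      rintro ⟨d, h⟩ -
      rintro ⟨hin, hout⟩
      by_cases e0 : d = d0
      · subst e0
        rw [dp0 _ hd0nS, Finset.mem_singleton] at hin
        subst hin
        exact hout (by rw [hk1b]; simp)
      · by_cases e1 : d = d1
        · subst e1
          rw [dp1b] at hin
          exact absurd hin (Finset.notMem_empty _)
        · rw [dpx _ d e0 e1] at hin
          exact absurd hin (Finset.notMem_empty _)
    rw [this, Finset.union_empty]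
  have mrej : mRej (mkR d0 d1 h1 h2) V = {(d1, h1)} := by
    unfold mRej
    exact iterate_fixed_of_one mstep1 mstep2 (card_DH_pos d0 h1)
  have fm : finalMatch (mkR d0 d1 h1 h2) V = {(d0, h1)} := by
    unfold finalMatch
    rw [mrej]
    ext ⟨d, h⟩
    simp only [Finset.mem_filter, Finset.mem_univ, true_and, Finset.mem_singleton,
      Prod.mk.injEq]
    constructor
    · rintro ⟨hin, hkp⟩
      by_cases e0 : d = d0
      · subst e0
        rw [dp0 _ hd0nS, Finset.mem_singleton] at hin
        exact ⟨rfl, hin⟩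
      · exfalso
        by_cases e1 : d = d1
        · subst e1
          rw [dp1b] at hin
          exact absurd hin (Finset.notMem_empty _)
        · rw [dpx _ d e0 e1] at hin
          exact absurd hin (Finset.notMem_empty _)
    · rintro ⟨rfl, rfl⟩
      exact ⟨by rw [dp0 _ hd0nS]; simp, by rw [hk1b]; simp⟩
  unfold ikMatching
  rw [hiv]
  exact fm

/-- If `(ι,κ)` is globally adequate and some doctor has interview
capacity greater than one, then every doctor and every hospital has interview
capacity at least two. -/
theorem globally_adequate_doctor_capacity
    (hD : 2 ≤ Fintype.card D) (hH : 2 ≤ Fintype.card H)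
    (ι : H → ℕ) (κ : D → ℕ) (hga : GloballyAdequate D H ι κ)
    (hex : ∃ d : D, 1 < κ d) :
    (∀ d : D, 2 ≤ κ d) ∧ (∀ h : H, 2 ≤ ι h) := by
  obtain ⟨ds, hds⟩ := hex
  have hκpos : ∀ d : D, 1 ≤ κ d := kappa_pos hH ι κ hga
  have hιpos : ∀ h : H, 1 ≤ ι h := iota_pos hD ι κ hga
  have hι2 : ∀ h : H, 2 ≤ ι h := by
    intro h1
    by_contra hc
    have hι1 : ι h1 = 1 := by have := hιpos h1; omega
    obtain ⟨h2, hh2⟩ := Fintype.exists_ne_of_one_lt_card (by omega) h1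
    obtain ⟨d1, hd1⟩ := Fintype.exists_ne_of_one_lt_card (by omega) ds
    have hst := hga _ (mkR_strict ds d1 h2 h1)
    unfold Adequate Stable at hst
    have hmat := mkB_ik (Ne.symm hd1) (Ne.symm hh2) ι κ (by omega) (hκpos d1) hι1
      (hιpos h2)
    apply hst d1 h1
    rw [Blocks, hmat]
    refine ⟨?_, ?_, ?_, ?_, ?_⟩
    · rw [mkR_accD_iff]
      exact ⟨Or.inr rfl, Or.inr rfl⟩
    · rw [mkR_accH_iff]
      exact ⟨Or.inr rfl, Or.inr rfl⟩
    · intro hm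
      rw [Finset.mem_singleton, Prod.mk.injEq] at hm
      exact hd1 hm.1
    · intro h' hm
      rw [Finset.mem_singleton, Prod.mk.injEq] at hm
      exact absurd hm.1 hd1
    · intro d' hm
      rw [Finset.mem_singleton, Prod.mk.injEq] at hm
      exact absurd hm.2 (Ne.symm hh2)
  have hκ2 : ∀ d : D, 2 ≤ κ d := by
    intro d1
    by_contra hc
    have hκ1 : κ d1 = 1 := by have := hκpos d1; omega
    have hd1 : ds ≠ d1 := fun e => by rw [e] at hds; omega
    obtain ⟨h1⟩ : Nonempty H := ⟨(Fintype.equivFin H).symm ⟨0, by omega⟩⟩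
    obtain ⟨h2, hh2⟩ := Fintype.exists_ne_of_one_lt_card (by omega) h1
    have hst := hga _ (mkR_strict ds d1 h1 h2)
    unfold Adequate Stable at hst
    have hmat := mkC_ik hd1 (Ne.symm hh2) ι κ (by omega) hκ1 (hι2 h1) (hι2 h2)
    apply hst d1 h2
    rw [Blocks, hmat]
    refine ⟨?_, ?_, ?_, ?_, ?_⟩
    · rw [mkR_accD_iff]
      exact ⟨Or.inr rfl, Or.inr rfl⟩
    · rw [mkR_accH_iff]
      exact ⟨Or.inr rfl, Or.inr rfl⟩
    · intro hm
      rw [Finset.mem_singleton, Prod.mk.injEq] at hm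
      exact hd1 hm.1.symm
    · intro h' hm
      rw [Finset.mem_singleton, Prod.mk.injEq] at hm
      exact absurd hm.1 (Ne.symm hd1)
    · intro d' hm
      rw [Finset.mem_singleton, Prod.mk.injEq] at hm
      exact absurd hm.2 hh2
  exact ⟨hκ2, hι2⟩
end
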